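/- arXiv:2111.11575 — 10 statements merged into one kernel-verified Lean document; each statement's English description precedes it below -/
import Mathlib

section
/- Let (X, ≤) be a topological poset. If (X, ≤) is order-connected, then every principal ideal x↓ = {z ∈ X : z ≤ x} and every principal filter x↑ = {z ∈ X : x ≤ z} is a connected subset of X. Conversely, if in addition (X, ≤) is an inf-semilattice with continuous meet (x, y) ↦ x ⊓ y and every principal filter is connected, then (X, ≤) is order-connected. -/
/-- Let `(X, ≤)` be a topological poset (the order graph is closed).
If it is order-connected, then every principal ideal `Iic x` and every principal filter
`Ici x` is connected.  Conversely, if moreover `X` carries an inf-semilattice structure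
(given here by a binary greatest-lower-bound operation `meet`) whose meet is continuous and
every principal filter is connected, then `(X, ≤)` is order-connected. -/
theorem orderConnected_iff_principal_ideals_filters_connected
    {X : Type*} [PartialOrder X] [TopologicalSpace X]
    (hclosed : IsClosed {p : X × X | p.1 ≤ p.2}) :
    ((∀ x y : X, x ≤ y → IsConnected (Set.Icc x y)) →
      (∀ x : X, IsConnected (Set.Iic x)) ∧ (∀ x : X, IsConnected (Set.Ici x))) ∧
    (∀ meet : X → X → X,
      (∀ x y : X, IsGLB {x, y} (meet x y)) →
      Continuous (fun p : X × X => meet p.1 p.2) →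
      (∀ x : X, IsConnected (Set.Ici x)) →
      ∀ x y : X, x ≤ y → IsConnected (Set.Icc x y)) := by
  constructor
  · intro h
    constructor
    · intro x
      refine ⟨⟨x, le_refl x⟩, isPreconnected_of_forall x fun y hy => ?_⟩
      exact ⟨Set.Icc y x, fun z hz => hz.2, ⟨hy, le_rfl⟩, ⟨le_rfl, hy⟩,
        (h y x hy).isPreconnected⟩
    · intro x
      refine ⟨⟨x, le_refl x⟩, isPreconnected_of_forall x fun y hy => ?_⟩
      exact ⟨Set.Icc x y, fun z hz => hz.1, ⟨le_rfl, hy⟩, ⟨hy, le_rfl⟩,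
        (h x y hy).isPreconnected⟩
  · intro meet hglb hcont hIci x y hxy
    have himg : Set.Icc x y = (fun z => meet z y) '' Set.Ici x := by
      ext z
      constructor
      · rintro ⟨hxz, hzy⟩
        refine ⟨z, hxz, le_antisymm ((hglb z y).1 (Set.mem_insert z _)) ?_⟩
        exact (hglb z y).2 fun a ha => by
          rcases ha with rfl | ha
          · exact le_rfl
          · simp_all
      · rintro ⟨w, hw, rfl⟩
        refine ⟨(hglb w y).2 fun a ha => ?_, (hglb w y).1 (by simp)⟩
        rcases ha with rfl | ha
        · exact hw
        · simp_all
    rw [himg]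
    exact (hIci x).image _
      (hcont.comp (continuous_id.prodMk continuous_const)).continuousOn
end

section
/- Let X be a Hausdorff topological space, let C(X) denote the collection of closed subsets of X equipped with the Fell topology, and let C₀(X) denote the subspace of nonempty closed subsets with the relative Fell topology. The following three conditions are equivalent: (1) X is locally compact; (2) the inclusion relation {(A, B) ∈ C(X) × C(X) : A ⊆ B} is closed in C(X) × C(X); (3) the inclusion relation {(A, B) ∈ C₀(X) × C₀(X) : A ⊆ B} is closed in C₀(X) × C₀(X). -/
open Set Filter Topology TopologicalSpace

instance fellTopology (X : Type*) [TopologicalSpace X] : TopologicalSpace (Closeds X) :=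
  TopologicalSpace.generateFrom
    ({S | ∃ O : Set X, IsOpen O ∧ S = {A : Closeds X | ((A : Set X) ∩ O).Nonempty}} ∪
     {S | ∃ K : Set X, IsCompact K ∧ S = {A : Closeds X | (A : Set X) ∩ K = ∅}})

section Aux
variable {X : Type*} [TopologicalSpace X]

/-- The subbasis of the Fell topology. -/
def fellGens (X : Type*) [TopologicalSpace X] : Set (Set (Closeds X)) :=
  ({S | ∃ O : Set X, IsOpen O ∧ S = {A : Closeds X | ((A : Set X) ∩ O).Nonempty}} ∪
   {S | ∃ K : Set X, IsCompact K ∧ S = {A : Closeds X | (A : Set X) ∩ K = ∅}})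

lemma fell_eq : (fellTopology X) = generateFrom (fellGens X) := rfl

def hitS (O : Set X) : Set (Closeds X) := {A : Closeds X | ((A : Set X) ∩ O).Nonempty}
def missS (K : Set X) : Set (Closeds X) := {A : Closeds X | (A : Set X) ∩ K = ∅}

lemma isOpen_hitS {O : Set X} (hO : IsOpen O) : IsOpen (hitS O) :=
  isOpen_generateFrom_of_mem (Or.inl ⟨O, hO, rfl⟩)

lemma isOpen_missS {K : Set X} (hK : IsCompact K) : IsOpen (missS K) :=
  isOpen_generateFrom_of_mem (Or.inr ⟨K, hK, rfl⟩)

variable [T1Space X]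

lemma hitS_injective : Function.Injective (hitS (X := X)) := by
  intro O O' h
  ext z
  have hz : ∀ P : Set X, z ∈ P ↔ (⟨{z}, isClosed_singleton⟩ : Closeds X) ∈ hitS P := by
    intro P
    simp [hitS, Set.singleton_inter_nonempty]
  rw [hz, h, ← hz]

lemma missS_injective : Function.Injective (missS (X := X)) := by
  intro K K' h
  ext z
  have hz : ∀ P : Set X, z ∈ P ↔ (⟨{z}, isClosed_singleton⟩ : Closeds X) ∉ missS P := by
    intro P
    simp [missS, Set.singleton_inter_eq_empty]
  rw [hz, h, ← hz]

/-- Basic neighborhoods in the Fell topology. -/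
lemma fell_mem_nhds {A : Closeds X} {s : Set (Closeds X)} (hs : s ∈ 𝓝 A) :
    ∃ (I : Set (Set X)) (K : Set X), I.Finite ∧
      (∀ O ∈ I, IsOpen O ∧ ((A : Set X) ∩ O).Nonempty) ∧
      IsCompact K ∧ (A : Set X) ∩ K = ∅ ∧
      ∀ B : Closeds X, (∀ O ∈ I, ((B : Set X) ∩ O).Nonempty) → (B : Set X) ∩ K = ∅ → B ∈ s := by
  obtain ⟨t, ⟨f, ⟨hfin, hsub⟩, rfl⟩, hAt, hts⟩ :=
    (isTopologicalBasis_of_subbasis (fell_eq (X := X))).mem_nhds_iff.mp hs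
  classical
  set I : Set (Set X) := {O | IsOpen O ∧ hitS O ∈ f} with hI
  set 𝒦 : Set (Set X) := {K | IsCompact K ∧ missS K ∈ f} with h𝒦
  have hIfin : I.Finite := (hfin.preimage (hitS_injective.injOn)).subset fun O hO => hO.2
  have h𝒦fin : 𝒦.Finite := (hfin.preimage (missS_injective.injOn)).subset fun K hK => hK.2
  refine ⟨I, ⋃ K ∈ 𝒦, K, hIfin, ?_, ?_, ?_, ?_⟩
  · exact fun O hO => ⟨hO.1, hAt _ hO.2⟩
  · exact h𝒦fin.isCompact_biUnion fun K hK => hK.1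
  · apply eq_empty_of_forall_notMem
    rintro z ⟨hzA, hzK⟩
    simp only [mem_iUnion] at hzK
    obtain ⟨K, hK, hzK⟩ := hzK
    have : (A : Set X) ∩ K = ∅ := hAt _ hK.2
    exact absurd this (by exact fun h => (eq_empty_iff_forall_notMem.mp h z) ⟨hzA, hzK⟩)
  · intro B hBO hBK
    apply hts
    intro g hg
    rcases hsub hg with ⟨O, hO, rfl⟩ | ⟨K, hK, rfl⟩
    · exact hBO O ⟨hO, hg⟩
    · show (B : Set X) ∩ K = ∅
      apply eq_empty_of_forall_notMem
      rintro z ⟨hzB, hzK⟩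
      have : z ∈ (B : Set X) ∩ ⋃ K ∈ 𝒦, K := ⟨hzB, mem_iUnion₂.mpr ⟨K, ⟨hK, hg⟩, hzK⟩⟩
      rw [hBK] at this
      exact this

end Aux

section Main
variable {X : Type*} [TopologicalSpace X] [T2Space X]
set_option linter.unusedSectionVars false

lemma closed_subset_of_lc (h : LocallyCompactSpace X) :
    IsClosed {p : Closeds X × Closeds X | (p.1 : Set X) ⊆ (p.2 : Set X)} := by
  rw [← isOpen_compl_iff]
  rw [isOpen_iff_forall_mem_open]
  rintro ⟨A, B⟩ hp
  simp only [mem_compl_iff, mem_setOf_eq] at hp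
  obtain ⟨x, hxA, hxB⟩ := not_subset.mp hp
  obtain ⟨K, hK, hxK, hKB⟩ := exists_compact_subset (B.2.isOpen_compl) hxB
  refine ⟨hitS (interior K) ×ˢ missS K, ?_, (isOpen_hitS isOpen_interior).prod (isOpen_missS hK), ?_, ?_⟩
  · rintro ⟨A', B'⟩ ⟨hA', hB'⟩
    simp only [mem_compl_iff, mem_setOf_eq]
    obtain ⟨z, hzA, hzK⟩ := hA'
    intro hsub
    have : z ∈ (B' : Set X) ∩ K := ⟨hsub hzA, interior_subset hzK⟩
    rw [hB'] at this
    exact this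
  · exact ⟨x, hxA, hxK⟩
  · apply eq_empty_of_forall_notMem
    rintro z ⟨hzB, hzK⟩
    exact hKB hzK hzB

lemma lc_of_closed_subset
    (h : IsClosed {p : Closeds X × Closeds X | (p.1 : Set X) ⊆ (p.2 : Set X)}) :
    LocallyCompactSpace X := by
  suffices h' : ∀ x : X, ∃ K, IsCompact K ∧ K ∈ 𝓝 x by
    haveI : WeaklyLocallyCompactSpace X := ⟨h'⟩
    infer_instance
  intro x
  have hmem : {p : Closeds X × Closeds X | (p.1 : Set X) ⊆ (p.2 : Set X)}ᶜ ∈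
      𝓝 ((⟨{x}, isClosed_singleton⟩ : Closeds X), (⊥ : Closeds X)) := by
    apply h.isOpen_compl.mem_nhds
    simp only [mem_compl_iff, mem_setOf_eq]
    intro hsub
    exact absurd (hsub rfl) (by simp)
  obtain ⟨U, hU, V, hV, hUV⟩ := mem_nhds_prod_iff.mp hmem
  obtain ⟨IU, KU, hIUfin, hIU, hKU, hAKU, hUmem⟩ := fell_mem_nhds hU
  obtain ⟨IV, KV, _, hIV, hKV, _, hVmem⟩ := fell_mem_nhds hV
  have hIVempty : IV = ∅ := by
    apply eq_empty_of_forall_notMem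
    intro O hO
    have := (hIV O hO).2
    simp at this
  refine ⟨KV, hKV, ?_⟩
  rw [mem_nhds_iff]
  refine ⟨⋂₀ IU ∩ KUᶜ, ?_, ?_, ?_⟩
  · rintro z ⟨hz1, hz2⟩
    by_contra hzKV
    have hAU : (⟨{z}, isClosed_singleton⟩ : Closeds X) ∈ U := by
      apply hUmem
      · intro O hO
        exact ⟨z, rfl, hz1 O hO⟩
      · simpa [Set.singleton_inter_eq_empty] using hz2
    have hAV : (⟨{z}, isClosed_singleton⟩ : Closeds X) ∈ V := by
      apply hVmem
      · simp [hIVempty]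
      · simpa [Set.singleton_inter_eq_empty] using hzKV
    have hc := hUV (Set.mk_mem_prod hAU hAV)
    simp only [mem_compl_iff, mem_setOf_eq] at hc
    exact hc (subset_refl _)
  · exact ((hIUfin.isOpen_sInter fun O hO => (hIU O hO).1).inter hKU.isClosed.isOpen_compl)
  · constructor
    · exact fun O hO => by
        obtain ⟨z, hz, hzO⟩ := (hIU O hO).2
        rwa [mem_singleton_iff.mp hz] at hzO
    · intro hxKU
      exact (eq_empty_iff_forall_notMem.mp hAKU x) ⟨rfl, hxKU⟩

lemma lc_of_closed_subset₀
    (h : IsClosed {p : {A : Closeds X // (A : Set X).Nonempty} ×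
                    {A : Closeds X // (A : Set X).Nonempty} |
        (p.1.1 : Set X) ⊆ (p.2.1 : Set X)}) :
    LocallyCompactSpace X := by
  by_cases hdeg : ∀ y z : X, y = z
  · haveI : Subsingleton X := ⟨hdeg⟩
    haveI : Finite X := Finite.of_subsingleton
    infer_instance
  push_neg at hdeg
  obtain ⟨a, b, hab⟩ := hdeg
  suffices h' : ∀ x : X, ∃ K, IsCompact K ∧ K ∈ 𝓝 x by
    haveI : WeaklyLocallyCompactSpace X := ⟨h'⟩
    infer_instance
  intro x
  obtain ⟨y, hyx⟩ : ∃ y : X, y ≠ x := by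
    rcases eq_or_ne x a with rfl | hxa
    · exact ⟨b, fun hbx => hab hbx.symm⟩
    · exact ⟨a, fun hax => hxa hax.symm⟩
  -- open set in the subspace product comes from an open set of the ambient product
  have hind : IsInducing (Prod.map (Subtype.val) (Subtype.val) :
      {A : Closeds X // (A : Set X).Nonempty} × {A : Closeds X // (A : Set X).Nonempty} →
      Closeds X × Closeds X) :=
    IsInducing.prodMap ⟨rfl⟩ ⟨rfl⟩
  obtain ⟨W, hWopen, hWeq⟩ := hind.isOpen_iff.mp h.isOpen_compl
  have hxW : ((⟨{x}, isClosed_singleton⟩ : Closeds X), (⟨{y}, isClosed_singleton⟩ : Closeds X))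
      ∈ W := by
    have : ((⟨⟨{x}, isClosed_singleton⟩, singleton_nonempty x⟩ :
        {A : Closeds X // (A : Set X).Nonempty}),
        (⟨⟨{y}, isClosed_singleton⟩, singleton_nonempty y⟩ :
        {A : Closeds X // (A : Set X).Nonempty})) ∈
        {p : {A : Closeds X // (A : Set X).Nonempty} ×
                    {A : Closeds X // (A : Set X).Nonempty} |
        (p.1.1 : Set X) ⊆ (p.2.1 : Set X)}ᶜ := by
      simp only [mem_compl_iff, mem_setOf_eq]
      intro hsub
      exact hyx (mem_singleton_iff.mp (hsub rfl)).symm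
    rw [← hWeq] at this
    exact this
  have hmem : W ∈ 𝓝 ((⟨{x}, isClosed_singleton⟩ : Closeds X),
      (⟨{y}, isClosed_singleton⟩ : Closeds X)) := hWopen.mem_nhds hxW
  obtain ⟨U, hU, V, hV, hUV⟩ := mem_nhds_prod_iff.mp hmem
  obtain ⟨IU, KU, hIUfin, hIU, hKU, hAKU, hUmem⟩ := fell_mem_nhds hU
  obtain ⟨IV, KV, hIVfin, hIV, hKV, hBKV, hVmem⟩ := fell_mem_nhds hV
  have hyKV : y ∉ KV := fun hy => (eq_empty_iff_forall_notMem.mp hBKV y) ⟨rfl, hy⟩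
  refine ⟨KV, hKV, ?_⟩
  rw [mem_nhds_iff]
  refine ⟨⋂₀ IU ∩ KUᶜ, ?_, ?_, ?_⟩
  · rintro z ⟨hz1, hz2⟩
    by_contra hzKV
    have hAU : (⟨{z}, isClosed_singleton⟩ : Closeds X) ∈ U := by
      apply hUmem
      · intro O hO
        exact ⟨z, rfl, hz1 O hO⟩
      · simpa [Set.singleton_inter_eq_empty] using hz2
    have hBcl : IsClosed ({y, z} : Set X) := by
      rw [Set.insert_eq]
      exact isClosed_singleton.union isClosed_singleton
    have hBV : (⟨{y, z}, hBcl⟩ : Closeds X) ∈ V := by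
      apply hVmem
      · intro O hO
        obtain ⟨w, hw, hwO⟩ := (hIV O hO).2
        rw [mem_singleton_iff.mp hw] at hwO
        exact ⟨y, Or.inl rfl, hwO⟩
      · apply eq_empty_of_forall_notMem
        rintro w ⟨hw, hwKV⟩
        rcases hw with rfl | rfl
        · exact hyKV hwKV
        · exact hzKV hwKV
    have hpair : ((⟨{z}, isClosed_singleton⟩ : Closeds X), (⟨{y, z}, hBcl⟩ : Closeds X)) ∈ W :=
      hUV (Set.mk_mem_prod hAU hBV)
    have : ((⟨⟨{z}, isClosed_singleton⟩, singleton_nonempty z⟩ :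
        {A : Closeds X // (A : Set X).Nonempty}),
        (⟨⟨{y, z}, hBcl⟩, ⟨y, Or.inl rfl⟩⟩ :
        {A : Closeds X // (A : Set X).Nonempty})) ∈
        Prod.map (Subtype.val) (Subtype.val) ⁻¹' W := hpair
    rw [hWeq] at this
    exact this (fun w hw => Or.inr hw)
  · exact ((hIUfin.isOpen_sInter fun O hO => (hIU O hO).1).inter hKU.isClosed.isOpen_compl)
  · constructor
    · exact fun O hO => by
        obtain ⟨z, hz, hzO⟩ := (hIU O hO).2
        rwa [mem_singleton_iff.mp hz] at hzO
    · intro hxKU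
      exact (eq_empty_iff_forall_notMem.mp hAKU x) ⟨rfl, hxKU⟩

end Main

/-- For a Hausdorff space `X`, the following are equivalent:
(1) `X` is locally compact;
(2) the inclusion relation is closed in `C(X) × C(X)` for the Fell topology;
(3) the inclusion relation is closed in `C₀(X) × C₀(X)` for the relative Fell topology,
where `C₀(X)` is the subspace of nonempty closed sets. -/
theorem locallyCompact_iff_subset_closed_in_fell
    (X : Type*) [TopologicalSpace X] [T2Space X] :
    (LocallyCompactSpace X ↔
      IsClosed {p : Closeds X × Closeds X | (p.1 : Set X) ⊆ (p.2 : Set X)}) ∧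
    (LocallyCompactSpace X ↔
      IsClosed {p : {A : Closeds X // (A : Set X).Nonempty} ×
                    {A : Closeds X // (A : Set X).Nonempty} |
        (p.1.1 : Set X) ⊆ (p.2.1 : Set X)}) := by
  constructor
  · exact ⟨closed_subset_of_lc, lc_of_closed_subset⟩
  · constructor
    · intro h
      have hcl := closed_subset_of_lc h
      have : {p : {A : Closeds X // (A : Set X).Nonempty} ×
                    {A : Closeds X // (A : Set X).Nonempty} |
        (p.1.1 : Set X) ⊆ (p.2.1 : Set X)} =
          (Prod.map (Subtype.val) (Subtype.val)) ⁻¹'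
            {p : Closeds X × Closeds X | (p.1 : Set X) ⊆ (p.2 : Set X)} := rfl
      rw [this]
      exact hcl.preimage ((continuous_subtype_val).prodMap (continuous_subtype_val))
    · exact lc_of_closed_subset₀
end

section
/- Let (X, ≤) be an inf-semilattice with a Hausdorff topology such that the meet (x, y) ↦ x ⊓ y is continuous from X × X to X. Then the canonical map x ↦ x↓ = {z ∈ X : z ≤ x}, viewed as a map from X into C(X) equipped with the Fell topology, is continuous. -/
open Set Filter Topology TopologicalSpace

/-- In a Hausdorff topological ∧-semilattice, every principal ideal is closed. -/
lemma isClosed_Iic_of_continuous_inf {X : Type*} [SemilatticeInf X] [TopologicalSpace X]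
    [T2Space X] (hmeet : Continuous fun p : X × X => p.1 ⊓ p.2) (x : X) :
    IsClosed (Set.Iic x) := by
  have e : Set.Iic x = {z : X | z ⊓ x = z} := by ext z; simp [inf_eq_left]
  rw [e]
  exact isClosed_eq (hmeet.comp (continuous_id.prodMk continuous_const)) continuous_id

/-- For a Hausdorff topological ∧-semilattice `(X, ≤)`, the canonical map
`x ↦ x↓ = Iic x` from `X` into the closed sets `C(X)` with the Fell topology is continuous. -/
theorem continuous_principalIdeal_of_topological_semilattice
    {X : Type*} [SemilatticeInf X] [TopologicalSpace X] [T2Space X]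
    (hmeet : Continuous fun p : X × X => p.1 ⊓ p.2) :
    Continuous (fun x : X =>
      (⟨Set.Iic x, isClosed_Iic_of_continuous_inf hmeet x⟩ : Closeds X)) := by
  rw [fellTopology, continuous_generateFrom_iff]
  rintro S (⟨O, hO, rfl⟩ | ⟨K, hK, rfl⟩)
  · -- preimage is {x | ∃ z ∈ O, z ≤ x}, open
    rw [isOpen_iff_mem_nhds]
    intro x hx
    obtain ⟨z, hz1, hz2⟩ := hx
    have hzx : z ⊓ x = z := inf_eq_left.2 hz1
    have hc : Continuous fun y : X => z ⊓ y :=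
      hmeet.comp (continuous_const.prodMk continuous_id)
    have hU : IsOpen ((fun y : X => z ⊓ y) ⁻¹' O) := hO.preimage hc
    have hxU : x ∈ (fun y : X => z ⊓ y) ⁻¹' O := by simpa [hzx] using hz2
    filter_upwards [hU.mem_nhds hxU] with y hy
    exact ⟨z ⊓ y, inf_le_right, hy⟩
  · -- preimage is {x | Iic x ∩ K = ∅}; its complement is closed
    have hR : IsClosed {p : X × X | p.1 ≤ p.2} := by
      have : {p : X × X | p.1 ≤ p.2} = {p : X × X | p.1 ⊓ p.2 = p.1} := by
        ext p; simp [inf_eq_left]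
      rw [this]
      exact isClosed_eq hmeet continuous_fst
    have : CompactSpace ↥K := isCompact_iff_compactSpace.mp hK
    have hC : IsClosed {p : ↥K × X | (p.1 : X) ≤ p.2} :=
      hR.preimage ((continuous_subtype_val.comp continuous_fst).prodMk continuous_snd)
    have himg : IsClosed (Prod.snd '' {p : ↥K × X | (p.1 : X) ≤ p.2}) :=
      isClosedMap_snd_of_compactSpace _ hC
    have heq : (fun x : X =>
        (⟨Set.Iic x, isClosed_Iic_of_continuous_inf hmeet x⟩ : Closeds X)) ⁻¹'
        {A : Closeds X | (A : Set X) ∩ K = ∅} =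
        (Prod.snd '' {p : ↥K × X | (p.1 : X) ≤ p.2})ᶜ := by
      ext x
      simp only [mem_preimage, mem_setOf_eq, mem_compl_iff, mem_image, not_exists]
      constructor
      · intro h ⟨z, y⟩ ⟨hzy, hy⟩
        rw [Set.eq_empty_iff_forall_notMem] at h
        exact h z ⟨hy ▸ hzy, z.2⟩
      · intro h
        rw [Set.eq_empty_iff_forall_notMem]
        rintro z ⟨hz1, hz2⟩
        exact h (⟨z, hz2⟩, x) ⟨hz1, rfl⟩
    rw [heq]
    exact himg.isOpen_compl
end

section
/- Let (X, ≤) be an inf-semilattice with a compact Hausdorff topology such that the meet (x, y) ↦ x ⊓ y is continuous from X × X to X. Then the canonical map x ↦ x↓ = {z ∈ X : z ≤ x}, viewed as a map from X into C(X) equipped with the Vietoris topology, is a topological embedding (a homeomorphism onto its image) and an order-embedding: x ≤ y if and only if x↓ ⊆ y↓. -/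
open Set Filter Topology TopologicalSpace

/-- The Vietoris topology on the hyperspace of closed subsets of `X`: it is generated by the
sets `{A : A ∩ O ≠ ∅}` for `O` open and the sets `{A : A ⊆ X \ F}` for `F` closed. -/
instance vietorisTopology (X : Type*) [TopologicalSpace X] : TopologicalSpace (Closeds X) :=
  TopologicalSpace.generateFrom
    ({S | ∃ O : Set X, IsOpen O ∧ S = {A : Closeds X | ((A : Set X) ∩ O).Nonempty}} ∪
     {S | ∃ F : Set X, IsClosed F ∧ S = {A : Closeds X | (A : Set X) ⊆ Fᶜ}})

/-- Subbasic "hit" sets are Vietoris-open. -/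
lemma vietoris_isOpen_hit {X : Type*} [TopologicalSpace X] {O : Set X} (hO : IsOpen O) :
    IsOpen {A : Closeds X | ((A : Set X) ∩ O).Nonempty} :=
  isOpen_generateFrom_of_mem (Or.inl ⟨O, hO, rfl⟩)

/-- Subbasic "miss" sets are Vietoris-open. -/
lemma vietoris_isOpen_miss {X : Type*} [TopologicalSpace X] {F : Set X} (hF : IsClosed F) :
    IsOpen {A : Closeds X | (A : Set X) ⊆ Fᶜ} :=
  isOpen_generateFrom_of_mem (Or.inr ⟨F, hF, rfl⟩)

lemma vietoris_sep {X : Type*} [TopologicalSpace X] [T2Space X] [CompactSpace X]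
    {A B : Closeds X} {a : X} (ha : a ∈ (A : Set X)) (hb : a ∉ (B : Set X)) :
    ∃ u v : Set (Closeds X), IsOpen u ∧ IsOpen v ∧ A ∈ u ∧ B ∈ v ∧ Disjoint u v := by
  obtain ⟨U, V, hU, hV, haU, hBV, hUV⟩ :=
    SeparatedNhds.of_isCompact_isCompact isCompact_singleton
      (B.isClosed.isCompact) (Set.disjoint_singleton_left.mpr hb)
  refine ⟨{C : Closeds X | ((C : Set X) ∩ U).Nonempty}, {C : Closeds X | (C : Set X) ⊆ (Vᶜ)ᶜ},
    vietoris_isOpen_hit hU, vietoris_isOpen_miss hV.isClosed_compl, ⟨a, ha, haU rfl⟩,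
    by simpa using hBV, ?_⟩
  · rw [Set.disjoint_left]
    rintro C ⟨c, hcC, hcU⟩ hC
    have : c ∈ V := by simpa using hC hcC
    exact Set.disjoint_left.mp hUV hcU this

/-- The Vietoris topology on the closed sets of a compact Hausdorff space is Hausdorff. -/
lemma vietoris_t2 {X : Type*} [TopologicalSpace X] [T2Space X] [CompactSpace X] :
    T2Space (Closeds X) := by
  constructor
  intro A B hAB
  have hne : (A : Set X) ≠ (B : Set X) := fun h => hAB (Closeds.ext h)
  by_cases h : (A : Set X) ⊆ (B : Set X)
  · have : ¬ (B : Set X) ⊆ (A : Set X) := fun h' => hne (le_antisymm h h')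
    rcases Set.not_subset.mp this with ⟨b, hbB, hbA⟩
    rcases vietoris_sep hbB hbA with ⟨u, v, hu, hv, hBu, hAv, huv⟩
    exact ⟨v, u, hv, hu, hAv, hBu, huv.symm⟩
  · rcases Set.not_subset.mp h with ⟨a, haA, haB⟩
    rcases vietoris_sep haA haB with ⟨u, v, hu, hv, hAu, hBv, huv⟩
    exact ⟨u, v, hu, hv, hAu, hBv, huv⟩

/-- For a compact Hausdorff topological ∧-semilattice `(X, ≤)`, the canonical
map `x ↦ x↓ = Iic x` from `X` into `C(X)` with the Vietoris topology is a topological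
embedding, and it is an order-embedding: `x ≤ y ↔ Iic x ⊆ Iic y`. -/
theorem isEmbedding_principalIdeal_vietoris_of_compact_semilattice
    {X : Type*} [SemilatticeInf X] [TopologicalSpace X] [T2Space X] [CompactSpace X]
    (hmeet : Continuous fun p : X × X => p.1 ⊓ p.2) :
    IsEmbedding (fun x : X =>
      (⟨Set.Iic x, isClosed_Iic_of_continuous_inf hmeet x⟩ : Closeds X)) ∧
    ∀ x y : X, x ≤ y ↔ Set.Iic x ⊆ Set.Iic y := by
  haveI : T2Space (Closeds X) := vietoris_t2
  set f : X → Closeds X :=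
    fun x => ⟨Set.Iic x, isClosed_Iic_of_continuous_inf hmeet x⟩ with hf
  have hinj : Function.Injective f := fun x y h =>
    Set.Iic_injective (congrArg (fun C : Closeds X => (C : Set X)) h)
  have hcont : Continuous f := by
    rw [show (vietorisTopology X : TopologicalSpace (Closeds X)) =
      TopologicalSpace.generateFrom _ from rfl] at *
    refine continuous_generateFrom_iff.mpr ?_
    rintro s (⟨O, hO, rfl⟩ | ⟨F, hF, rfl⟩)
    · have : f ⁻¹' {A : Closeds X | ((A : Set X) ∩ O).Nonempty}
          = ⋃ z ∈ O, (fun v => z ⊓ v) ⁻¹' O := by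
        ext x
        constructor
        · rintro ⟨w, hwx, hwO⟩
          exact Set.mem_biUnion hwO (by simpa [inf_eq_left.mpr (hwx : w ≤ x)] using hwO)
        · intro hx
          rcases Set.mem_iUnion₂.mp hx with ⟨z, hz, hzO⟩
          exact ⟨z ⊓ x, inf_le_right, hzO⟩
      rw [this]
      exact isOpen_biUnion fun z _ =>
        hO.preimage (hmeet.comp (continuous_const.prodMk continuous_id))
    · have hcl : IsClosed (Prod.snd '' ((F ×ˢ (Set.univ : Set X)) ∩
          {p : X × X | p.1 ⊓ p.2 = p.1})) :=
        isClosedMap_snd_of_compactSpace _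
          ((hF.prod isClosed_univ).inter (isClosed_eq hmeet continuous_fst))
      have : f ⁻¹' {A : Closeds X | (A : Set X) ⊆ Fᶜ}
          = (Prod.snd '' ((F ×ˢ (Set.univ : Set X)) ∩ {p : X × X | p.1 ⊓ p.2 = p.1}))ᶜ := by
        ext x
        simp only [Set.mem_preimage, Set.mem_setOf_eq, Set.mem_compl_iff, Set.mem_image,
          Set.mem_inter_iff, Set.mem_prod, Set.mem_univ, and_true, Prod.exists]
        constructor
        · rintro h ⟨z, y, ⟨hzF, hzy⟩, rfl⟩
          exact h (inf_eq_left.mp hzy : z ≤ y) hzF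
        · intro h z (hzx : z ≤ x) hzF
          exact h ⟨z, x, ⟨hzF, inf_eq_left.mpr hzx⟩, rfl⟩
      rw [this]
      exact hcl.isOpen_compl
  exact ⟨(hcont.isClosedEmbedding hinj).isEmbedding,
    fun x y => ⟨fun h => Set.Iic_subset_Iic.mpr h, fun h => Set.Iic_subset_Iic.mp h⟩⟩
end

section
/- Let (X₁, ≤₁) and (X₂, ≤₂) be topological posets each of which is a complete inf-semilattice (every nonempty subset has an infimum). Assume (X₁, ≤₁) is locally compact and order-connected, and let f : X₁ → X₂ be continuous and order-preserving (x ≤₁ y implies f(x) ≤₂ f(y)). Then for every nonempty subset S of X₁ that is ≤₁-filtered (every nonempty finite subset of S has a lower bound belonging to S), one has f(inf S) = inf f(S). -/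
open Filter Set Topology


/-- Let `(X₁, ≤₁)` and `(X₂, ≤₂)` be topological posets, each a complete
inf-semilattice (every nonempty subset has an infimum), with `X₁` locally compact and
order-connected.  If `f : X₁ → X₂` is continuous and order-preserving, then `f` preserves the
infimum of every nonempty filtered subset `S` of `X₁`: `f(inf S) = inf f(S)`. -/
theorem map_sInf_of_filtered
    {X₁ : Type*} [PartialOrder X₁] [TopologicalSpace X₁] [LocallyCompactSpace X₁]
    {X₂ : Type*} [PartialOrder X₂] [TopologicalSpace X₂]
    (h₁ : IsClosed {p : X₁ × X₁ | p.1 ≤ p.2})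
    (h₂ : IsClosed {p : X₂ × X₂ | p.1 ≤ p.2})
    (hcomp₁ : ∀ S : Set X₁, S.Nonempty → ∃ a, IsGLB S a)
    (hcomp₂ : ∀ S : Set X₂, S.Nonempty → ∃ a, IsGLB S a)
    (hconn : ∀ x y : X₁, x ≤ y → IsConnected (Set.Icc x y))
    (f : X₁ → X₂) (hf : Continuous f) (hmono : Monotone f)
    (S : Set X₁) (hS : S.Nonempty)
    (hfil : ∀ t : Set X₁, t ⊆ S → t.Finite → t.Nonempty → ∃ b ∈ S, ∀ x ∈ t, b ≤ x)
    (a : X₁) (ha : IsGLB S a) :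
    IsGLB (f '' S) (f a) := by
  classical
  have hdown : ∀ c : X₁, IsClosed {y : X₁ | y ≤ c} := fun c =>
    h₁.preimage (continuous_id.prodMk continuous_const)
  have hup : ∀ c : X₁, IsClosed {y : X₁ | c ≤ y} := fun c =>
    h₁.preimage (continuous_const.prodMk continuous_id)
  have hIcc : ∀ c d : X₁, IsClosed (Set.Icc c d) := fun c d => (hup c).inter (hdown d)
  haveI : T2Space X₁ := by
    rw [t2_iff_isClosed_diagonal]
    have hd : (Set.diagonal X₁) =
        {p : X₁ × X₁ | p.1 ≤ p.2} ∩ {p : X₁ × X₁ | p.2 ≤ p.1} := by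
      ext p
      simp only [Set.mem_diagonal_iff, Set.mem_inter_iff, Set.mem_setOf_eq]
      constructor
      · intro h; exact ⟨le_of_eq h, ge_of_eq h⟩
      · rintro ⟨hh1, hh2⟩; exact le_antisymm hh1 hh2
    rw [hd]
    exact h₁.inter (h₁.preimage continuous_swap)
  -- unique cluster point lemma
  have hclus : ∀ (F : Filter X₁), (∀ s ∈ S, ∃ V ∈ F, V ⊆ Set.Icc a s) →
      ∀ z, ClusterPt z F → z = a := by
    intro F hF z hz
    have key : ∀ s ∈ S, z ∈ Set.Icc a s := by
      intro s hs
      obtain ⟨V, hVF, hVs⟩ := hF s hs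
      have : ClusterPt z (𝓟 V) := hz.mono (le_principal_iff.2 hVF)
      have hzV : z ∈ closure V := mem_closure_iff_clusterPt.2 this
      exact closure_minimal hVs (hIcc a s) hzV
    obtain ⟨s0, hs0⟩ := hS
    exact le_antisymm (ha.2 fun s hs => (key s hs).2) (key s0 hs0).1
  constructor
  · rintro y ⟨x, hx, rfl⟩
    exact hmono (ha.1 hx)
  · intro b hb
    obtain ⟨K, hK, hKa⟩ := exists_compact_mem_nhds a
    have hKc : IsClosed K := hK.isClosed
    have haK : a ∈ interior K := mem_interior_iff_mem_nhds.2 hKa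
    -- Step 1: some tail of S lies in K
    have hstep : ∃ s₀ ∈ S, ∀ t ∈ S, t ≤ s₀ → t ∈ K := by
      by_contra hcon
      push_neg at hcon
      set S' : Set X₁ := {s ∈ S | s ∉ K} with hS'def
      have hcof : ∀ s ∈ S, ∃ t ∈ S', t ≤ s := by
        intro s hs
        obtain ⟨t, htS, hts, htK⟩ := hcon s hs
        exact ⟨t, ⟨htS, htK⟩, hts⟩
      obtain ⟨s1, hs1⟩ := hS
      obtain ⟨t1, ht1, -⟩ := hcof s1 hs1
      have hS'ne : S'.Nonempty := ⟨t1, ht1⟩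
      -- choice of frontier points
      have hxex : ∀ s : X₁, ∃ w, s ∈ S' → w ∈ frontier K ∩ Set.Icc a s := by
        intro s
        by_cases hs : s ∈ S'
        · have hsS : s ∈ S := hs.1
          have has : a ≤ s := ha.1 hsS
          have hpc := (hconn a s has).isPreconnected
          by_contra hemp
          push_neg at hemp
          have hemp' : Set.Icc a s ∩ frontier K = ∅ := by
            ext w
            simp only [Set.mem_inter_iff, Set.mem_empty_iff_false, iff_false]
            rintro ⟨hwI, hwF⟩
            exact (hemp w).2 ⟨hwF, hwI⟩
          have hcover : Set.Icc a s ⊆ interior K ∪ Kᶜ := by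
            intro w hw
            by_cases hwK : w ∈ K
            · left
              have : w ∉ frontier K := fun hfr =>
                Set.eq_empty_iff_forall_notMem.1 hemp' w ⟨hw, hfr⟩
              rw [hKc.frontier_eq] at this
              simp only [Set.mem_diff, not_and, not_not] at this
              exact this hwK
            · right; exact hwK
          obtain ⟨w, hwI, hwu, hwv⟩ := hpc (interior K) Kᶜ isOpen_interior hKc.isOpen_compl
            hcover ⟨a, Set.left_mem_Icc.2 has, haK⟩ ⟨s, Set.right_mem_Icc.2 has, hs.2⟩
          exact hwv (interior_subset hwu)
        · exact ⟨a, fun h => absurd h hs⟩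
      choose x hx using hxex
      set p : X₁ → Set X₁ := fun s => x '' {t ∈ S' | t ≤ s} with hpdef
      have hdir : DirectedOn (p ⁻¹'o (· ≥ ·)) S' := by
        intro s hs t ht
        obtain ⟨u, huS, hu⟩ := hfil {s, t} (by
          rintro v (rfl | rfl); exacts [hs.1, ht.1]) ((Set.finite_singleton _).insert _)
          ⟨s, Set.mem_insert _ _⟩
        obtain ⟨u', hu'S', hu'u⟩ := hcof u huS
        refine ⟨u', hu'S', ?_, ?_⟩ <;>
          · apply Set.image_mono
            intro v hv
            exact ⟨hv.1, le_trans hv.2 (le_trans hu'u (hu _ (by simp)))⟩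
      have hbasis := Filter.hasBasis_biInf_principal hdir hS'ne
      set G : Filter X₁ := ⨅ s ∈ S', 𝓟 (p s) with hGdef
      haveI hGne : G.NeBot := hbasis.neBot_iff.2 fun {s} hs => ⟨x s, Set.mem_image_of_mem _ ⟨hs, le_rfl⟩⟩
      have hmemG : ∀ s ∈ S', p s ∈ G := fun s hs => hbasis.mem_of_mem hs
      have hpfr : ∀ s ∈ S', p s ⊆ frontier K := by
        rintro s hs w ⟨t, ht, rfl⟩
        exact (hx t ht.1).1
      have hGfr : G ≤ 𝓟 (frontier K) :=
        le_principal_iff.2 (Filter.mem_of_superset (hmemG t1 ht1) (hpfr t1 ht1))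
      have hfrK : IsCompact (frontier K) :=
        hK.of_isClosed_subset isClosed_frontier (hKc.frontier_eq ▸ Set.diff_subset)
      obtain ⟨z, hzfr, hz⟩ := hfrK.exists_clusterPt hGfr
      have hza : z = a := by
        apply hclus G _ z hz
        intro s hs
        obtain ⟨t, htS', hts⟩ := hcof s hs
        refine ⟨p t, hmemG t htS', ?_⟩
        rintro w ⟨v, hv, rfl⟩
        have h1 := (hx v hv.1).2
        exact ⟨h1.1, le_trans h1.2 (le_trans hv.2 hts)⟩
      rw [hza, hKc.frontier_eq] at hzfr
      exact hzfr.2 haK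
    obtain ⟨s₀, hs₀S, hs₀⟩ := hstep
    set T : X₁ → Set X₁ := fun s => {t ∈ S | t ≤ s} with hTdef
    have hdir : DirectedOn (T ⁻¹'o (· ≥ ·)) S := by
      intro s hs t ht
      obtain ⟨u, huS, hu⟩ := hfil {s, t} (by
        rintro v (rfl | rfl); exacts [hs, ht]) ((Set.finite_singleton _).insert _)
        ⟨s, Set.mem_insert _ _⟩
      refine ⟨u, huS, ?_, ?_⟩ <;>
        · intro v hv
          exact ⟨hv.1, le_trans hv.2 (hu _ (by simp))⟩
    have hbasis := Filter.hasBasis_biInf_principal hdir hS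
    set F : Filter X₁ := ⨅ s ∈ S, 𝓟 (T s) with hFdef
    haveI hFne : F.NeBot := hbasis.neBot_iff.2 fun {s} hs => ⟨s, hs, le_rfl⟩
    have hmemF : ∀ s ∈ S, T s ∈ F := fun s hs => hbasis.mem_of_mem hs
    have hTIcc : ∀ s ∈ S, T s ⊆ Set.Icc a s := fun s _ t ht => ⟨ha.1 ht.1, ht.2⟩
    have hFK : F ≤ 𝓟 K :=
      le_principal_iff.2 (Filter.mem_of_superset (hmemF s₀ hs₀S) fun t ht => hs₀ t ht.1 ht.2)
    -- F converges to a
    have hFa : F ≤ 𝓝 a := by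
      by_contra hno
      obtain ⟨V, hV, hVF⟩ : ∃ V ∈ 𝓝 a, V ∉ F := by
        by_contra hh
        push_neg at hh
        exact hno fun V hV => hh V hV
      obtain ⟨C, hC, hCc, hCV⟩ := exists_mem_nhds_isClosed_subset hV
      have hCF : C ∉ F := fun h => hVF (Filter.mem_of_superset h hCV)
      haveI hne : (F ⊓ 𝓟 Cᶜ).NeBot := by
        rw [Filter.inf_principal_neBot_iff]
        intro U hU
        by_contra hUe
        rw [Set.not_nonempty_iff_eq_empty] at hUe
        have hUC : U ⊆ C := by
          intro u hu
          by_contra huC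
          exact Set.eq_empty_iff_forall_notMem.1 hUe u ⟨hu, huC⟩
        exact hCF (Filter.mem_of_superset hU hUC)
      obtain ⟨z, hzK, hz⟩ := hK.exists_clusterPt (f := F ⊓ 𝓟 Cᶜ) (le_trans inf_le_left hFK)
      have hza : z = a := by
        apply hclus (F ⊓ 𝓟 Cᶜ) _ z hz
        intro s hs
        exact ⟨T s, Filter.mem_inf_of_left (hmemF s hs), hTIcc s hs⟩
      have hzC : z ∈ closure Cᶜ :=
        mem_closure_iff_clusterPt.2 (hz.mono inf_le_right)
      rw [closure_compl] at hzC
      rw [hza] at hzC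
      exact hzC (mem_interior_iff_mem_nhds.2 hC)
    have htend : Filter.Tendsto f F (𝓝 (f a)) := (hf.tendsto a).comp hFa
    have hclosed : IsClosed {y : X₂ | b ≤ y} :=
      h₂.preimage (continuous_const.prodMk continuous_id)
    have hev : ∀ᶠ t in F, f t ∈ {y : X₂ | b ≤ y} := by
      filter_upwards [Filter.mem_of_superset (hmemF s₀ hs₀S) (fun t ht => ht.1 : T s₀ ⊆ S)] with t ht
      exact hb ⟨t, ht, rfl⟩
    exact hclosed.mem_of_tendsto htend hev
end

section
/- Let (X₁, ≤₁) and (X₂, ≤₂) be topological posets each of which is a complete inf-semilattice (every nonempty subset has an infimum), with (X₁, ≤₁) locally compact and order-connected. Then every continuous map f : X₁ → X₂ satisfying f(x ⊓ y) = f(x) ⊓ f(y) for all x, y ∈ X₁ is a complete ∧-homomorphism: f(inf S) = inf f(S) for every nonempty subset S of X₁. -/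
/-- Let `(X₁, ≤₁)` and `(X₂, ≤₂)` be topological posets, each a complete
inf-semilattice (every nonempty subset has an infimum), with `X₁` locally compact and
order-connected.  Then every continuous ∧-homomorphism `f : X₁ → X₂` (i.e.
`f (x ⊓ y) = f x ⊓ f y`) is a complete ∧-homomorphism: `f(inf S) = inf f(S)` for every
nonempty `S ⊆ X₁`. -/
theorem map_sInf_of_inf_hom
    {X₁ : Type*} [SemilatticeInf X₁] [TopologicalSpace X₁] [LocallyCompactSpace X₁]
    {X₂ : Type*} [SemilatticeInf X₂] [TopologicalSpace X₂]
    (h₁ : IsClosed {p : X₁ × X₁ | p.1 ≤ p.2})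
    (h₂ : IsClosed {p : X₂ × X₂ | p.1 ≤ p.2})
    (hcomp₁ : ∀ S : Set X₁, S.Nonempty → ∃ a, IsGLB S a)
    (hcomp₂ : ∀ S : Set X₂, S.Nonempty → ∃ a, IsGLB S a)
    (hconn : ∀ x y : X₁, x ≤ y → IsConnected (Set.Icc x y))
    (f : X₁ → X₂) (hf : Continuous f)
    (hhom : ∀ x y : X₁, f (x ⊓ y) = f x ⊓ f y)
    (S : Set X₁) (hS : S.Nonempty) (a : X₁) (ha : IsGLB S a) :
    IsGLB (f '' S) (f a) := by
  -- `f` is monotone.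
  have hmono : Monotone f := by
    intro x y hxy
    have h := hhom x y
    rw [inf_eq_left.mpr hxy] at h
    rw [h]
    exact inf_le_right
  -- `X₁` is Hausdorff, since its diagonal is closed.
  haveI : T2Space X₁ := by
    rw [t2_iff_isClosed_diagonal]
    have hdiag : Set.diagonal X₁ = {p : X₁ × X₁ | p.1 ≤ p.2} ∩ {p : X₁ × X₁ | p.2 ≤ p.1} := by
      ext p
      simp only [Set.mem_diagonal_iff, Set.mem_inter_iff, Set.mem_setOf_eq]
      exact ⟨fun h => ⟨le_of_eq h, ge_of_eq h⟩, fun h => le_antisymm h.1 h.2⟩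
    rw [hdiag]
    exact h₁.inter (h₁.preimage continuous_swap)
  have hclosed_ge : ∀ c : X₁, IsClosed {x : X₁ | c ≤ x} :=
    fun c => h₁.preimage (Continuous.prodMk_right c)
  have hclosed_le : ∀ c : X₁, IsClosed {x : X₁ | x ≤ c} :=
    fun c => h₁.preimage (continuous_id.prodMk continuous_const)
  constructor
  · rintro _ ⟨s, hs, rfl⟩
    exact hmono (ha.1 hs)
  · rintro b hb
    -- `T` is the closed, `⊓`-closed set of points above `a` whose image is above `b`.
    set T : Set X₁ := {x : X₁ | a ≤ x ∧ b ≤ f x} with hTdef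
    have hST : S ⊆ T := fun s hs => ⟨ha.1 hs, hb ⟨s, hs, rfl⟩⟩
    have hTne : T.Nonempty := hS.mono hST
    have hTinf : ∀ x ∈ T, ∀ y ∈ T, x ⊓ y ∈ T := by
      intro x hx y hy
      refine ⟨le_inf hx.1 hy.1, ?_⟩
      rw [hhom]
      exact le_inf hx.2 hy.2
    have hTclosed : IsClosed T := by
      have : T = {x : X₁ | a ≤ x} ∩ f ⁻¹' {y : X₂ | b ≤ y} := rfl
      rw [this]
      exact (hclosed_ge a).inter ((h₂.preimage (Continuous.prodMk_right b)).preimage hf)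
    -- it suffices to show `a ∈ T`.
    by_contra hba
    have haT : a ∉ T := fun h => hba h.2
    obtain ⟨K, hK_mem, hK_sub, hK_comp⟩ :=
      local_compact_nhds (hTclosed.isOpen_compl.mem_nhds haT)
    have hKcl : IsClosed K := hK_comp.isClosed
    have haint : a ∈ interior K := mem_interior_iff_mem_nhds.mpr hK_mem
    -- each `[a, t] ∩ frontier K` for `t ∈ T` is nonempty (by order-connectedness) ...
    have hFne : ∀ t ∈ T, (Set.Icc a t ∩ frontier K).Nonempty := by
      intro t ht
      by_contra hemp
      rw [Set.not_nonempty_iff_eq_empty] at hemp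
      have hsub : Set.Icc a t ⊆ interior K ∪ Kᶜ := by
        intro x hx
        by_cases hxK : x ∈ K
        · left
          by_contra hxint
          have hxfr : x ∈ frontier K := by
            rw [hKcl.frontier_eq]
            exact ⟨hxK, hxint⟩
          exact absurd hemp (Set.nonempty_iff_ne_empty.mp ⟨x, hx, hxfr⟩)
        · right; exact hxK
      have htK : t ∉ K := fun h => hK_sub h ht
      obtain ⟨x, _, hxi, hxc⟩ :=
        (hconn a t ht.1).isPreconnected _ _ isOpen_interior hKcl.isOpen_compl hsub
          ⟨a, ⟨le_refl a, ht.1⟩, haint⟩ ⟨t, ⟨ht.1, le_refl t⟩, htK⟩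
      exact hxc (interior_subset hxi)
    -- ... compact, closed, and directed; take `z` in the intersection.
    haveI : Nonempty T := hTne.to_subtype
    have hFcl : ∀ t : T, IsClosed (Set.Icc a t.1 ∩ frontier K) :=
      fun t => ((hclosed_ge a).inter (hclosed_le t.1)).inter isClosed_frontier
    have hfrK : frontier K ⊆ K := by
      rw [hKcl.frontier_eq]; exact Set.diff_subset
    obtain ⟨z, hz⟩ :=
      IsCompact.nonempty_iInter_of_directed_nonempty_isCompact_isClosed
        (fun t : T => Set.Icc a t.1 ∩ frontier K)
        (by
          intro t₁ t₂
          refine ⟨⟨t₁.1 ⊓ t₂.1, hTinf _ t₁.2 _ t₂.2⟩, ?_, ?_⟩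
          · exact Set.inter_subset_inter_left _
              (Set.Icc_subset_Icc le_rfl inf_le_left)
          · exact Set.inter_subset_inter_left _
              (Set.Icc_subset_Icc le_rfl inf_le_right))
        (fun t => hFne t.1 t.2)
        (fun t => hK_comp.of_isClosed_subset (hFcl t)
          ((Set.inter_subset_right).trans hfrK))
        hFcl
    -- `z` is a lower bound of `T ⊇ S`, and `a ≤ z`, so `z = a`.
    have hzmem := Set.mem_iInter.mp hz
    have hz_lb : ∀ t ∈ T, z ≤ t := fun t ht => (hzmem ⟨t, ht⟩).1.2
    obtain ⟨t₀, ht₀⟩ := hTne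
    have hz_ge : a ≤ z := (hzmem ⟨t₀, ht₀⟩).1.1
    have hz_fr : z ∈ frontier K := (hzmem ⟨t₀, ht₀⟩).2
    have hza : z = a := le_antisymm (ha.2 fun s hs => hz_lb s (hST hs)) hz_ge
    rw [hza, hKcl.frontier_eq] at hz_fr
    exact hz_fr.2 haint
end

section
/- Let (X, ≤) be a locally compact, order-connected topological poset satisfying the countable-chain condition: every nonempty countable chain in X has an infimum. Let f : X → X be continuous and order-preserving (x ≤ y implies f(x) ≤ f(y)). If f(x) ≤ x for some x ∈ X, then f has a fixed point. -/
/-- (A Tarski–Kantorovich type fixed point theorem.)  Let `(X, ≤)` be a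
locally compact, order-connected topological poset in which every nonempty countable chain has
an infimum.  If `f : X → X` is continuous and order-preserving and `f x ≤ x` for some `x`,
then `f` has a fixed point. -/
theorem exists_fixedPoint_of_orderConnected_topological_poset
    {X : Type*} [PartialOrder X] [TopologicalSpace X] [LocallyCompactSpace X]
    (hclosed : IsClosed {p : X × X | p.1 ≤ p.2})
    (hconn : ∀ x y : X, x ≤ y → IsConnected (Set.Icc x y))
    (hccc : ∀ S : Set X, S.Nonempty → S.Countable → IsChain (· ≤ ·) S → ∃ a, IsGLB S a)
    (f : X → X) (hf : Continuous f) (hmono : Monotone f)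
    (x : X) (hx : f x ≤ x) :
    ∃ y : X, f y = y := by
  -- X is Hausdorff
  haveI : T2Space X := by
    rw [t2_iff_isClosed_diagonal]
    have h2 : IsClosed {p : X × X | p.2 ≤ p.1} :=
      hclosed.preimage (continuous_snd.prodMk continuous_fst)
    have : Set.diagonal X = {p : X × X | p.1 ≤ p.2} ∩ {p : X × X | p.2 ≤ p.1} := by
      ext p
      simp only [Set.mem_diagonal_iff, Set.mem_inter_iff, Set.mem_setOf_eq]
      exact le_antisymm_iff
    rw [this]
    exact hclosed.inter h2
  -- closed intervals
  have hIcc : ∀ a b : X, IsClosed (Set.Icc a b) := by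
    intro a b
    have h1 : IsClosed {z : X | a ≤ z} :=
      hclosed.preimage ((continuous_const (y := a)).prodMk continuous_id)
    have h2 : IsClosed {z : X | z ≤ b} :=
      hclosed.preimage (continuous_id.prodMk (continuous_const (y := b)))
    exact h1.inter h2
  -- the orbit
  set u : ℕ → X := fun n => f^[n] x with hu
  have hstep : ∀ n, f (u n) ≤ u n := by
    intro n
    induction n with
    | zero => exact hx
    | succ n ih =>
      have : u (n + 1) = f (u n) := Function.iterate_succ_apply' f n x
      rw [this]
      exact hmono ih
  have hanti : Antitone u := by
    apply antitone_nat_of_succ_le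
    intro n
    have : u (n + 1) = f (u n) := Function.iterate_succ_apply' f n x
    rw [this]
    exact hstep n
  -- the infimum
  obtain ⟨a, ha⟩ : ∃ a, IsGLB (Set.range u) a := by
    refine hccc (Set.range u) (Set.range_nonempty u) (Set.countable_range u) ?_
    rintro _ ⟨m, rfl⟩ _ ⟨n, rfl⟩ _
    rcases le_total m n with h | h
    · exact Or.inr (hanti h)
    · exact Or.inl (hanti h)
  have hle : ∀ n, a ≤ u n := fun n => ha.1 ⟨n, rfl⟩
  -- convergence of the orbit to a
  have htend : Filter.Tendsto u Filter.atTop (nhds a) := by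
    intro V hV
    rw [Filter.mem_map]
    obtain ⟨K, hKnhds, hKV, hKcomp⟩ := local_compact_nhds hV
    have hKclosed : IsClosed K := hKcomp.isClosed
    have haU : a ∈ interior K := mem_interior_iff_mem_nhds.2 hKnhds
    -- claim: eventually u n ∈ K
    have hev : ∀ᶠ n in Filter.atTop, u n ∈ K := by
      by_contra hcon
      rw [Filter.not_eventually] at hcon
      have hfreq : ∀ m : ℕ, ∃ n, m ≤ n ∧ u n ∉ K :=
        fun m => (hcon.forall_exists_of_atTop m)
      -- the sets D n
      set D : ℕ → Set X := fun n => Set.Icc a (u n) ∩ (K \ interior K) with hD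
      have hDanti : ∀ n, D (n + 1) ⊆ D n := by
        intro n
        apply Set.inter_subset_inter_left
        exact Set.Icc_subset_Icc_right (hanti (Nat.le_succ n))
      have hDclosed : ∀ n, IsClosed (D n) :=
        fun n => ((hIcc a (u n)).inter (hKclosed.sdiff isOpen_interior))
      have hDanti' : ∀ n m, n ≤ m → D m ⊆ D n := by
        intro n m hnm
        apply Set.inter_subset_inter_left
        exact Set.Icc_subset_Icc_right (hanti hnm)
      have hDnonempty : ∀ n, (D n).Nonempty := by
        intro n
        obtain ⟨m, hnm, hm⟩ := hfreq n
        apply Set.Nonempty.mono (hDanti' n m hnm)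
        by_contra hemp
        rw [Set.not_nonempty_iff_eq_empty] at hemp
        have hcm : IsConnected (Set.Icc a (u m)) := hconn a (u m) (hle m)
        have hsub : Set.Icc a (u m) ⊆ interior K ∪ Kᶜ := by
          intro z hz
          by_cases hzK : z ∈ K
          · left
            by_contra hzi
            exact absurd hemp (Set.nonempty_iff_ne_empty.1 ⟨z, hz, hzK, hzi⟩)
          · exact Or.inr hzK
        have h1 : (Set.Icc a (u m) ∩ interior K).Nonempty :=
          ⟨a, ⟨le_rfl, hle m⟩, haU⟩
        have h2 : (Set.Icc a (u m) ∩ Kᶜ).Nonempty :=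
          ⟨u m, ⟨hle m, le_rfl⟩, hm⟩
        have hdisj : interior K ∩ Kᶜ = ∅ := by
          apply Set.eq_empty_of_forall_notMem
          rintro z ⟨hz1, hz2⟩
          exact hz2 (interior_subset hz1)
        have := hcm.2 (interior K) Kᶜ isOpen_interior hKclosed.isOpen_compl hsub h1 h2
        rw [hdisj, Set.inter_empty] at this
        exact this.ne_empty rfl
      have hinter : (⋂ n, D n).Nonempty :=
        IsCompact.nonempty_iInter_of_sequence_nonempty_isCompact_isClosed D hDanti hDnonempty
          (hKcomp.of_isClosed_subset (hDclosed 0)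
            (Set.inter_subset_right.trans Set.diff_subset)) hDclosed
      obtain ⟨y, hy⟩ := hinter
      simp only [Set.mem_iInter] at hy
      have hylb : y ∈ lowerBounds (Set.range u) := by
        rintro _ ⟨n, rfl⟩
        exact (hy n).1.2
      have hya : y ≤ a := ha.2 hylb
      have hay : a ≤ y := (hy 0).1.1
      have : y = a := le_antisymm hya hay
      exact (hy 0).2.2 (this ▸ haU)
    filter_upwards [hev] with n hn using hKV hn
  -- conclude f a = a
  refine ⟨a, ?_⟩
  have h1 : Filter.Tendsto (fun n => f (u n)) Filter.atTop (nhds (f a)) :=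
    (hf.tendsto a).comp htend
  have h2 : Filter.Tendsto (fun n => f (u n)) Filter.atTop (nhds a) := by
    have : (fun n => f (u n)) = fun n => u (n + 1) := by
      funext n
      exact (Function.iterate_succ_apply' f n x).symm
    rw [this]
    exact htend.comp (Filter.tendsto_add_atTop_nat 1)
  exact tendsto_nhds_unique h1 h2
end

section
/- Let (X, ≤) be a lattice equipped with a locally compact, connected Hausdorff topology such that the meet (x, y) ↦ x ⊓ y and the join (x, y) ↦ x ⊔ y are continuous from X × X to X. Then X is locally convex: its topology has a basis consisting of ≤-convex sets (sets S such that x, y ∈ S and x ≤ z ≤ y imply z ∈ S). -/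
open Set Filter Topology

section AndersonAux

variable {X : Type*} [Lattice X] [TopologicalSpace X]

theorem auxLeClosed [T2Space X] (hmeet : Continuous fun p : X × X => p.1 ⊓ p.2) :
    IsClosed {q : X × X | q.1 ≤ q.2} := by
  have h : {q : X × X | q.1 ≤ q.2}
      = (fun q : X × X => (q.1 ⊓ q.2, q.1)) ⁻¹' (Set.diagonal X) := by
    ext q
    simp only [mem_setOf_eq, mem_preimage, Set.mem_diagonal_iff]
    exact ⟨fun h => inf_eq_left.2 h, fun h => inf_eq_left.1 h⟩
  rw [h]
  exact isClosed_diagonal.preimage (hmeet.prodMk continuous_fst)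

/-- Closed intervals are preconnected (retracts of the connected space). -/

theorem auxIccPreconn [ConnectedSpace X]
    (hmeet : Continuous fun p : X × X => p.1 ⊓ p.2)
    (hjoin : Continuous fun p : X × X => p.1 ⊔ p.2)
    {a b : X} (hab : a ≤ b) : IsPreconnected (Set.Icc a b) := by
  have hf : Continuous fun x : X => (x ⊔ a) ⊓ b := by
    have h1 : Continuous fun x : X => x ⊔ a :=
      hjoin.comp (continuous_id.prodMk continuous_const)
    exact hmeet.comp (h1.prodMk continuous_const)
  have himg : (fun x : X => (x ⊔ a) ⊓ b) '' univ = Set.Icc a b := by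
    apply subset_antisymm
    · rintro _ ⟨x, -, rfl⟩
      exact ⟨le_inf (le_sup_right) hab, inf_le_right⟩
    · rintro z ⟨hz1, hz2⟩
      exact ⟨z, mem_univ z, by simp only []; rw [sup_eq_left.2 hz1, inf_eq_left.2 hz2]⟩
  rw [← himg]
  exact isPreconnected_univ.image _ hf.continuousOn

theorem auxCross [ConnectedSpace X]
    (hmeet : Continuous fun p : X × X => p.1 ⊓ p.2)
    (hjoin : Continuous fun p : X × X => p.1 ⊔ p.2)
    {G : Set X} (hG : IsOpen G) {a z : X} (haz : a ≤ z)
    (haG : a ∈ G) (hz : z ∉ G) :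
    ∃ d, d ∈ closure G ∧ d ∉ G ∧ a ≤ d ∧ d ≤ z := by
  by_cases hzL : z ∈ closure G
  · exact ⟨z, hzL, hz, haz, le_rfl⟩
  · by_contra hno
    push_neg at hno
    have hsub : Set.Icc a z ⊆ G ∪ (closure G)ᶜ := by
      intro x hx
      by_cases hxc : x ∈ closure G
      · left
        by_contra hxG
        exact hno x hxc hxG hx.1 hx.2
      · right; exact hxc
    have hpc := auxIccPreconn hmeet hjoin haz
    have h1 : (Set.Icc a z ∩ G).Nonempty := ⟨a, ⟨le_rfl, haz⟩, haG⟩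
    have h2 : (Set.Icc a z ∩ (closure G)ᶜ).Nonempty := ⟨z, ⟨haz, le_rfl⟩, hzL⟩
    obtain ⟨x, -, hxG, hxc⟩ := hpc G (closure G)ᶜ hG (isClosed_closure.isOpen_compl) hsub h1 h2
    exact hxc (subset_closure hxG)

theorem auxSmallIcc [T2Space X] [ConnectedSpace X]
    (hmeet : Continuous fun p : X × X => p.1 ⊓ p.2)
    (hjoin : Continuous fun p : X × X => p.1 ⊔ p.2)
    {G : Set X} (hG : IsOpen G) (hLc : IsCompact (closure G)) {p : X} (hp : p ∈ G) :
    ∃ N1 ∈ 𝓝 p, ∃ N2 ∈ 𝓝 p, ∀ a ∈ N1, ∀ b ∈ N2, a ≤ p → p ≤ b → Set.Icc a b ⊆ G := by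
  by_contra h
  push_neg at h
  -- the bad boundary sets
  set SN : Set X → Set X := fun N =>
    {d | (d ∈ closure G ∧ d ∉ G) ∧ ∃ a ∈ N, ∃ b ∈ N, a ≤ p ∧ p ≤ b ∧ a ≤ d ∧ d ≤ b} with hSNdef
  have hSNsub : ∀ N, SN N ⊆ closure G ∩ Gᶜ := fun N d hd => ⟨hd.1.1, hd.1.2⟩
  have hSNmono : ∀ {M N : Set X}, M ⊆ N → SN M ⊆ SN N := by
    rintro M N hMN d ⟨hd1, a, ha, b, hb, hrest⟩
    exact ⟨hd1, a, hMN ha, b, hMN hb, hrest⟩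
  have hSNne : ∀ N ∈ 𝓝 p, (SN N).Nonempty := by
    intro N hN
    obtain ⟨a, ha, b, hb, hap, hpb, hnsub⟩ := h (N ∩ G) (inter_mem hN (hG.mem_nhds hp)) N hN
    obtain ⟨z, hzIcc, hzG⟩ := not_subset.1 hnsub
    obtain ⟨d, hd1, hd2, hd3, hd4⟩ := auxCross hmeet hjoin hG hzIcc.1 ha.2 hzG
    exact ⟨d, ⟨hd1, hd2⟩, a, ha.1, b, hb, hap, hpb, hd3, le_trans hd4 hzIcc.2⟩
  -- compactness: pick a common cluster point
  haveI : Nonempty {N : Set X // N ∈ 𝓝 p} := ⟨⟨univ, univ_mem⟩⟩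
  set K : {N : Set X // N ∈ 𝓝 p} → Set X := fun N => closure (SN N.1) with hKdef
  have hKbd : ∀ N, K N ⊆ closure G ∩ Gᶜ := fun N =>
    closure_minimal (hSNsub N.1) (isClosed_closure.inter hG.isClosed_compl)
  have hKne : ∀ N, (K N).Nonempty := fun N => (hSNne N.1 N.2).closure
  have hKcl : ∀ N, IsClosed (K N) := fun N => isClosed_closure
  have hKcp : ∀ N, IsCompact (K N) := fun N =>
    hLc.of_isClosed_subset (hKcl N) ((hKbd N).trans inter_subset_left)
  have hdir : Directed (· ⊇ ·) K := by
    intro N M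
    refine ⟨⟨N.1 ∩ M.1, inter_mem N.2 M.2⟩, ?_, ?_⟩
    · exact closure_mono (hSNmono inter_subset_left)
    · exact closure_mono (hSNmono inter_subset_right)
  obtain ⟨d₀, hd₀⟩ :=
    IsCompact.nonempty_iInter_of_directed_nonempty_isCompact_isClosed K hdir hKne hKcp hKcl
  have hd₀N : ∀ N ∈ 𝓝 p, d₀ ∈ closure (SN N) := by
    intro N hN
    exact mem_iInter.1 hd₀ ⟨N, hN⟩
  -- d₀ ≤ p
  have hle : d₀ ≤ p := by
    have hcl : (d₀, p) ∈ closure {q : X × X | q.1 ≤ q.2} := by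
      rw [mem_closure_iff_nhds]
      intro t ht
      rw [mem_nhds_prod_iff] at ht
      obtain ⟨Ω, hΩ, N, hN, hsub⟩ := ht
      obtain ⟨d, hdΩ, ⟨-, a, haN, b, hbN, hap, hpb, had, hdb⟩⟩ :=
        mem_closure_iff_nhds.1 (hd₀N N hN) Ω hΩ
      exact ⟨(d, b), hsub (mk_mem_prod hdΩ hbN), hdb⟩
    exact (auxLeClosed hmeet).closure_subset hcl
  have hge : p ≤ d₀ := by
    have hcl : (p, d₀) ∈ closure {q : X × X | q.1 ≤ q.2} := by
      rw [mem_closure_iff_nhds]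
      intro t ht
      rw [mem_nhds_prod_iff] at ht
      obtain ⟨N, hN, Ω, hΩ, hsub⟩ := ht
      obtain ⟨d, hdΩ, ⟨-, a, haN, b, hbN, hap, hpb, had, hdb⟩⟩ :=
        mem_closure_iff_nhds.1 (hd₀N N hN) Ω hΩ
      exact ⟨(a, d), hsub (mk_mem_prod haN hdΩ), had⟩
    exact (auxLeClosed hmeet).closure_subset hcl
  have : d₀ = p := le_antisymm hle hge
  have hbad := hKbd ⟨univ, univ_mem⟩ (mem_iInter.1 hd₀ _)
  rw [this] at hbad
  exact hbad.2 hp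

theorem auxUpCompact [T2Space X] (hmeet : Continuous fun p : X × X => p.1 ⊓ p.2)
    {D C : Set X} (hD : IsCompact D) (hC : IsCompact C) :
    IsCompact {y | y ∈ D ∧ ∃ c ∈ C, c ≤ y} := by
  have hE : IsCompact ({q : X × X | q.1 ≤ q.2} ∩ C ×ˢ D) :=
    (hC.prod hD).inter_left (auxLeClosed hmeet)
  have himg : Prod.snd '' ({q : X × X | q.1 ≤ q.2} ∩ C ×ˢ D)
      = {y | y ∈ D ∧ ∃ c ∈ C, c ≤ y} := by
    ext y
    constructor
    · rintro ⟨⟨c, y'⟩, ⟨hle, hc, hy⟩, rfl⟩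
      exact ⟨hy, c, hc, hle⟩
    · rintro ⟨hy, c, hc, hle⟩
      exact ⟨(c, y), ⟨hle, hc, hy⟩, rfl⟩
  rw [← himg]
  exact hE.image continuous_snd

theorem auxDownCompact [T2Space X] (hmeet : Continuous fun p : X × X => p.1 ⊓ p.2)
    {D C : Set X} (hD : IsCompact D) (hC : IsCompact C) :
    IsCompact {y | y ∈ D ∧ ∃ c ∈ C, y ≤ c} := by
  have hE : IsCompact ({q : X × X | q.1 ≤ q.2} ∩ D ×ˢ C) :=
    (hD.prod hC).inter_left (auxLeClosed hmeet)
  have himg : Prod.fst '' ({q : X × X | q.1 ≤ q.2} ∩ D ×ˢ C)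
      = {y | y ∈ D ∧ ∃ c ∈ C, y ≤ c} := by
    ext y
    constructor
    · rintro ⟨⟨y', c⟩, ⟨hle, hy, hc⟩, rfl⟩
      exact ⟨hy, c, hc, hle⟩
    · rintro ⟨hy, c, hc, hle⟩
      exact ⟨(y, c), ⟨hle, hy, hc⟩, rfl⟩
  rw [← himg]
  exact hE.image continuous_fst

theorem auxSepUp [T2Space X] (hmeet : Continuous fun p : X × X => p.1 ⊓ p.2)
    {D : Set X} (hD : IsCompact D) {a q : X} (ha : a ∈ D) (hq : q ∈ D)
    (hnot : ¬ a ≤ q) :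
    ∃ A B' : Set X, IsOpen B' ∧ q ∈ B' ∧ a ∈ A ∧ A ⊆ D ∧
      (∃ A₀, IsOpen A₀ ∧ A = A₀ ∩ D) ∧ (A ∩ B' = ∅) ∧
      (∀ x ∈ A, ∀ y ∈ D, x ≤ y → y ∈ A) := by
  classical
  set Fq : Set X := {y | y ∈ D ∧ ∃ c ∈ ({q} : Set X), y ≤ c} with hFq
  set Fa : Set X := {y | y ∈ D ∧ ∃ c ∈ ({a} : Set X), c ≤ y} with hFa
  have hFqc : IsCompact Fq := auxDownCompact hmeet hD isCompact_singleton
  have hFac : IsCompact Fa := auxUpCompact hmeet hD isCompact_singleton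
  have hdisj : Disjoint Fq Fa := by
    rw [Set.disjoint_left]
    rintro y ⟨-, c, rfl, hyq⟩ ⟨-, c', rfl, hay⟩
    exact hnot (le_trans hay hyq)
  obtain ⟨O1, O2, hO1, hO2, hsub1, hsub2, hO12⟩ :=
    SeparatedNhds.of_isCompact_isCompact hFqc hFac hdisj
  -- B' : open set around q
  set UpBad : Set X := {y | y ∈ D ∧ ∃ c ∈ D ∩ O1ᶜ, c ≤ y} with hUpBad
  have hUpBadc : IsCompact UpBad :=
    auxUpCompact hmeet hD (hD.inter_right hO1.isClosed_compl)
  set B' : Set X := UpBadᶜ with hB'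
  have hB'o : IsOpen B' := hUpBadc.isClosed.isOpen_compl
  have hqB' : q ∈ B' := by
    rintro ⟨-, c, ⟨hcD, hcO1⟩, hcq⟩
    exact hcO1 (hsub1 ⟨hcD, q, rfl, hcq⟩)
  set B : Set X := B' ∩ D with hB
  have hBO1 : B ⊆ O1 := by
    rintro y ⟨hyB', hyD⟩
    by_contra hyO1
    exact hyB' ⟨hyD, y, ⟨hyD, hyO1⟩, le_rfl⟩
  -- A : relatively open upper set around a
  set DB : Set X := {y | y ∈ D ∧ ∃ c ∈ closure B ∩ D, y ≤ c} with hDB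
  have hDBc : IsCompact DB := auxDownCompact hmeet hD (hD.inter_left isClosed_closure)
  set A : Set X := D \ DB with hA
  have hclB : ∀ c, c ∈ closure B → c ∉ O2 := by
    have h1 : closure B ⊆ O2ᶜ :=
      closure_minimal (fun y hy => Set.disjoint_left.1 hO12 (hBO1 hy)) hO2.isClosed_compl
    exact fun c hc => h1 hc
  refine ⟨A, B', hB'o, hqB', ?_, Set.diff_subset, ⟨DBᶜ, hDBc.isClosed.isOpen_compl, ?_⟩, ?_, ?_⟩
  · -- a ∈ A
    refine ⟨ha, ?_⟩
    rintro ⟨-, c, ⟨hcB, hcD⟩, hac⟩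
    have hcO2 : c ∈ O2 := hsub2 ⟨hcD, a, rfl, hac⟩
    exact hclB c hcB hcO2
  · -- A = DBᶜ ∩ D
    rw [hA, Set.diff_eq, Set.inter_comm]
  · -- A ∩ B' = ∅
    ext y
    simp only [Set.mem_inter_iff, Set.mem_empty_iff_false, iff_false, not_and]
    rintro ⟨hyD, hyDB⟩ hyB'
    exact hyDB ⟨hyD, y, ⟨subset_closure ⟨hyB', hyD⟩, hyD⟩, le_rfl⟩
  · -- upper set in D
    rintro x ⟨hxD, hxDB⟩ y hyD hxy
    refine ⟨hyD, ?_⟩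
    rintro ⟨-, c, hc, hyc⟩
    exact hxDB ⟨hxD, c, hc, le_trans hxy hyc⟩

theorem auxSepDown [T2Space X] (hmeet : Continuous fun p : X × X => p.1 ⊓ p.2)
    {D : Set X} (hD : IsCompact D) {a q : X} (ha : a ∈ D) (hq : q ∈ D)
    (hnot : ¬ q ≤ a) :
    ∃ A B' : Set X, IsOpen B' ∧ q ∈ B' ∧ a ∈ A ∧ A ⊆ D ∧
      (∃ A₀, IsOpen A₀ ∧ A = A₀ ∩ D) ∧ (A ∩ B' = ∅) ∧
      (∀ x ∈ A, ∀ y ∈ D, y ≤ x → y ∈ A) := by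
  classical
  set Fq : Set X := {y | y ∈ D ∧ ∃ c ∈ ({q} : Set X), c ≤ y} with hFq
  set Fa : Set X := {y | y ∈ D ∧ ∃ c ∈ ({a} : Set X), y ≤ c} with hFa
  have hFqc : IsCompact Fq := auxUpCompact hmeet hD isCompact_singleton
  have hFac : IsCompact Fa := auxDownCompact hmeet hD isCompact_singleton
  have hdisj : Disjoint Fq Fa := by
    rw [Set.disjoint_left]
    rintro y ⟨-, c, rfl, hqy⟩ ⟨-, c', rfl, hya⟩
    exact hnot (le_trans hqy hya)
  obtain ⟨O1, O2, hO1, hO2, hsub1, hsub2, hO12⟩ :=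
    SeparatedNhds.of_isCompact_isCompact hFqc hFac hdisj
  set DownBad : Set X := {y | y ∈ D ∧ ∃ c ∈ D ∩ O1ᶜ, y ≤ c} with hDownBad
  have hDownBadc : IsCompact DownBad :=
    auxDownCompact hmeet hD (hD.inter_right hO1.isClosed_compl)
  set B' : Set X := DownBadᶜ with hB'
  have hB'o : IsOpen B' := hDownBadc.isClosed.isOpen_compl
  have hqB' : q ∈ B' := by
    rintro ⟨-, c, ⟨hcD, hcO1⟩, hqc⟩
    exact hcO1 (hsub1 ⟨hcD, q, rfl, hqc⟩)
  set B : Set X := B' ∩ D with hB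
  have hBO1 : B ⊆ O1 := by
    rintro y ⟨hyB', hyD⟩
    by_contra hyO1
    exact hyB' ⟨hyD, y, ⟨hyD, hyO1⟩, le_rfl⟩
  set UB : Set X := {y | y ∈ D ∧ ∃ c ∈ closure B ∩ D, c ≤ y} with hUB
  have hUBc : IsCompact UB := auxUpCompact hmeet hD (hD.inter_left isClosed_closure)
  set A : Set X := D \ UB with hA
  have hclB : ∀ c, c ∈ closure B → c ∉ O2 := by
    have h1 : closure B ⊆ O2ᶜ :=
      closure_minimal (fun y hy => Set.disjoint_left.1 hO12 (hBO1 hy)) hO2.isClosed_compl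
    exact fun c hc => h1 hc
  refine ⟨A, B', hB'o, hqB', ?_, Set.diff_subset, ⟨UBᶜ, hUBc.isClosed.isOpen_compl, ?_⟩, ?_, ?_⟩
  · refine ⟨ha, ?_⟩
    rintro ⟨-, c, ⟨hcB, hcD⟩, hca⟩
    exact hclB c hcB (hsub2 ⟨hcD, a, rfl, hca⟩)
  · rw [hA, Set.diff_eq, Set.inter_comm]
  · ext y
    simp only [Set.mem_inter_iff, Set.mem_empty_iff_false, iff_false, not_and]
    rintro ⟨hyD, hyUB⟩ hyB'
    exact hyUB ⟨hyD, y, ⟨subset_closure ⟨hyB', hyD⟩, hyD⟩, le_rfl⟩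
  · rintro x ⟨hxD, hxUB⟩ y hyD hyx
    refine ⟨hyD, ?_⟩
    rintro ⟨-, c, hc, hcy⟩
    exact hxUB ⟨hxD, c, hc, le_trans hcy hyx⟩

theorem auxD [T2Space X] [LocallyCompactSpace X] [ConnectedSpace X]
    (hmeet : Continuous fun p : X × X => p.1 ⊓ p.2)
    (hjoin : Continuous fun p : X × X => p.1 ⊔ p.2)
    {U : Set X} {p : X} (hU : IsOpen U) (hpU : p ∈ U) :
    ∃ D : Set X, IsCompact D ∧ D ⊆ U ∧ p ∈ interior D ∧
      ∀ x y z : X, x ∈ D → y ∈ D → x ≤ z → z ≤ y → z ∈ D := by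
  obtain ⟨K, hKc, hpK, hKU⟩ := exists_compact_subset hU hpU
  set G : Set X := interior K with hGdef
  have hGo : IsOpen G := isOpen_interior
  have hGp : p ∈ G := hpK
  have hLK : closure G ⊆ K := closure_minimal interior_subset hKc.isClosed
  have hLc : IsCompact (closure G) := hKc.of_isClosed_subset isClosed_closure hLK
  obtain ⟨N1, hN1, N2, hN2, hIcc⟩ := auxSmallIcc hmeet hjoin hGo hLc hGp
  have c1 : Continuous fun x : X => x ⊓ p := hmeet.comp (continuous_id.prodMk continuous_const)
  have c2 : Continuous fun x : X => x ⊔ p := hjoin.comp (continuous_id.prodMk continuous_const)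
  have hW1 : (fun x : X => x ⊓ p) ⁻¹' N1 ∈ 𝓝 p := by
    refine c1.continuousAt.preimage_mem_nhds ?_
    simpa [inf_idem] using hN1
  have hW2 : (fun x : X => x ⊔ p) ⁻¹' N2 ∈ 𝓝 p := by
    refine c2.continuousAt.preimage_mem_nhds ?_
    simpa [sup_idem] using hN2
  obtain ⟨Q, hQn, hQsub, hQc⟩ := local_compact_nhds (inter_mem hW1 hW2)
  set K1 : Set X := (fun x : X => x ⊓ p) '' Q with hK1def
  set K2 : Set X := (fun x : X => x ⊔ p) '' Q with hK2def
  have hK1c : IsCompact K1 := hQc.image c1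
  have hK2c : IsCompact K2 := hQc.image c2
  have hK1N : ∀ a ∈ K1, a ∈ N1 ∧ a ≤ p := by
    rintro a ⟨x, hx, rfl⟩
    exact ⟨(hQsub hx).1, inf_le_right⟩
  have hK2N : ∀ b ∈ K2, b ∈ N2 ∧ p ≤ b := by
    rintro b ⟨x, hx, rfl⟩
    exact ⟨(hQsub hx).2, le_sup_right⟩
  set D : Set X := {z | ∃ a ∈ K1, ∃ b ∈ K2, a ≤ z ∧ z ≤ b} with hDdef
  have hDG : D ⊆ G := by
    rintro z ⟨a, ha, b, hb, haz, hzb⟩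
    exact hIcc a (hK1N a ha).1 b (hK2N b hb).1 (hK1N a ha).2 (hK2N b hb).2 ⟨haz, hzb⟩
  have hQD : Q ⊆ D := by
    intro x hx
    exact ⟨x ⊓ p, mem_image_of_mem _ hx, x ⊔ p, mem_image_of_mem _ hx, inf_le_left, le_sup_left⟩
  have hpD : p ∈ interior D := interior_mono hQD (mem_interior_iff_mem_nhds.2 hQn)
  have hconv : ∀ x y z : X, x ∈ D → y ∈ D → x ≤ z → z ≤ y → z ∈ D := by
    rintro x y z ⟨a, ha, b, hb, hax, hxb⟩ ⟨a', ha', b', hb', hay, hyb⟩ hxz hzy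
    exact ⟨a, ha, b', hb', le_trans hax hxz, le_trans hzy hyb⟩
  -- compactness of D
  have hcl1 : IsClosed {t : (X × X) × X | t.1.1 ≤ t.2} := by
    have : {t : (X × X) × X | t.1.1 ≤ t.2}
        = (fun t : (X × X) × X => (t.1.1, t.2)) ⁻¹' {q : X × X | q.1 ≤ q.2} := rfl
    rw [this]
    exact (auxLeClosed hmeet).preimage
      ((continuous_fst.comp continuous_fst).prodMk continuous_snd)
  have hcl2 : IsClosed {t : (X × X) × X | t.2 ≤ t.1.2} := by
    have : {t : (X × X) × X | t.2 ≤ t.1.2}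
        = (fun t : (X × X) × X => (t.2, t.1.2)) ⁻¹' {q : X × X | q.1 ≤ q.2} := rfl
    rw [this]
    exact (auxLeClosed hmeet).preimage
      (continuous_snd.prodMk (continuous_snd.comp continuous_fst))
  set E : Set ((X × X) × X) :=
    (((K1 ×ˢ K2) ×ˢ closure G) ∩ {t | t.1.1 ≤ t.2}) ∩ {t | t.2 ≤ t.1.2} with hEdef
  have hEc : IsCompact E :=
    (((hK1c.prod hK2c).prod hLc).inter_right hcl1).inter_right hcl2
  have hDimg : D = Prod.snd '' E := by
    apply subset_antisymm
    · rintro z ⟨a, ha, b, hb, haz, hzb⟩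
      exact ⟨((a, b), z),
        ⟨⟨⟨⟨ha, hb⟩, subset_closure (hDG ⟨a, ha, b, hb, haz, hzb⟩)⟩, haz⟩, hzb⟩, rfl⟩
    · rintro _ ⟨⟨⟨a, b⟩, z⟩, ⟨⟨⟨⟨ha, hb⟩, -⟩, haz⟩, hzb⟩, rfl⟩
      exact ⟨a, ha, b, hb, haz, hzb⟩
  have hDc : IsCompact D := by
    rw [hDimg]; exact hEc.image continuous_snd
  exact ⟨D, hDc, hDG.trans (interior_subset.trans hKU), hpD, hconv⟩

end AndersonAux

/-- (Anderson's theorem.)  Every locally compact, connected Hausdorff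
topological lattice is locally convex: its topology has a basis consisting of order-convex
sets. -/
theorem locally_convex_of_connected_topological_lattice
    {X : Type*} [Lattice X] [TopologicalSpace X] [T2Space X] [LocallyCompactSpace X]
    [ConnectedSpace X]
    (hmeet : Continuous fun p : X × X => p.1 ⊓ p.2)
    (hjoin : Continuous fun p : X × X => p.1 ⊔ p.2) :
    ∃ B : Set (Set X), TopologicalSpace.IsTopologicalBasis B ∧
      ∀ S ∈ B, ∀ x y z : X, x ∈ S → y ∈ S → x ≤ z → z ≤ y → z ∈ S := by
  classical
  refine ⟨{S | IsOpen S ∧ ∀ x y z : X, x ∈ S → y ∈ S → x ≤ z → z ≤ y → z ∈ S}, ?_,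
    fun S hS => hS.2⟩
  apply TopologicalSpace.isTopologicalBasis_of_isOpen_of_nhds (fun u hu => hu.1)
  intro p u hpu hu
  obtain ⟨D, hDc, hDu, hpD, hDconv⟩ := auxD hmeet hjoin hu hpu
  set bd : Set X := D \ interior D with hbddef
  have hbdc : IsCompact bd := by
    rw [hbddef, Set.diff_eq]
    exact hDc.inter_right isOpen_interior.isClosed_compl
  have hpDmem : p ∈ D := interior_subset hpD
  -- separation data for each boundary point
  have hsep : ∀ q : X, ∃ P : Set X × Set X, q ∈ bd →
      IsOpen P.1 ∧ q ∈ P.1 ∧ p ∈ P.2 ∧ P.2 ⊆ D ∧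
      (∃ A₀, IsOpen A₀ ∧ P.2 = A₀ ∩ D) ∧ (P.2 ∩ P.1 = ∅) ∧
      (∀ x y z : X, x ∈ P.2 → y ∈ P.2 → z ∈ D → x ≤ z → z ≤ y → z ∈ P.2) := by
    intro q
    by_cases hqbd : q ∈ bd
    · have hqD : q ∈ D := hqbd.1
      have hqp : q ≠ p := fun h => hqbd.2 (h ▸ hpD)
      by_cases hpq : p ≤ q
      · have hqnp : ¬ q ≤ p := fun h => hqp (le_antisymm h hpq)
        obtain ⟨A, B', hB'o, hqB', hpA, hAD, hArel, hdisj, hAdown⟩ :=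
          auxSepDown hmeet hDc hpDmem hqD hqnp
        refine ⟨(B', A), fun _ => ⟨hB'o, hqB', hpA, hAD, hArel, hdisj, ?_⟩⟩
        intro x y z hx hy hzD hxz hzy
        exact hAdown y hy z hzD hzy
      · obtain ⟨A, B', hB'o, hqB', hpA, hAD, hArel, hdisj, hAup⟩ :=
          auxSepUp hmeet hDc hpDmem hqD hpq
        refine ⟨(B', A), fun _ => ⟨hB'o, hqB', hpA, hAD, hArel, hdisj, ?_⟩⟩
        intro x y z hx hy hzD hxz hzy
        exact hAup x hx z hzD hxz
    · exact ⟨(∅, ∅), fun h => absurd h hqbd⟩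
  choose f hf using hsep
  have hcover : bd ⊆ ⋃ q ∈ bd, (f q).1 := fun q hq =>
    Set.mem_biUnion hq (hf q hq).2.1
  obtain ⟨b', hb'sub, hb'fin, hb'cov⟩ :=
    hbdc.elim_finite_subcover_image (fun q hq => (hf q hq).1) hcover
  set S₀ : Set X := D ∩ ⋂ q ∈ b', (f q).2 with hS₀def
  have hpS₀ : p ∈ S₀ := by
    refine ⟨hpDmem, ?_⟩
    simp only [Set.mem_iInter]
    exact fun q hq => (hf q (hb'sub hq)).2.2.1
  have hS₀D : S₀ ⊆ D := inter_subset_left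
  have hS₀conv : ∀ x y z : X, x ∈ S₀ → y ∈ S₀ → x ≤ z → z ≤ y → z ∈ S₀ := by
    intro x y z hx hy hxz hzy
    have hzD : z ∈ D := hDconv x y z (hS₀D hx) (hS₀D hy) hxz hzy
    refine ⟨hzD, ?_⟩
    simp only [Set.mem_iInter]
    intro q hq
    have hx' := Set.mem_iInter.1 (Set.mem_iInter.1 hx.2 q) hq
    have hy' := Set.mem_iInter.1 (Set.mem_iInter.1 hy.2 q) hq
    exact (hf q (hb'sub hq)).2.2.2.2.2.2 x y z hx' hy' hzD hxz hzy
  have hS₀int : S₀ ⊆ interior D := by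
    intro z hz
    by_contra hzint
    have hzbd : z ∈ bd := ⟨hS₀D hz, hzint⟩
    obtain ⟨q, hqb', hzq⟩ := Set.mem_iUnion₂.1 (hb'cov hzbd)
    have hz' := Set.mem_iInter.1 (Set.mem_iInter.1 hz.2 q) hqb'
    have := (hf q (hb'sub hqb')).2.2.2.2.2.1
    exact Set.eq_empty_iff_forall_notMem.1 this z ⟨hz', hzq⟩
  -- choose open representatives
  have hch : ∀ q : X, ∃ A₀ : Set X, q ∈ b' → (IsOpen A₀ ∧ (f q).2 = A₀ ∩ D) := by
    intro q
    by_cases h : q ∈ b'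
    · obtain ⟨A₀, h1, h2⟩ := (hf q (hb'sub h)).2.2.2.2.1
      exact ⟨A₀, fun _ => ⟨h1, h2⟩⟩
    · exact ⟨∅, fun hh => absurd hh h⟩
  choose g hg using hch
  set O : Set X := ⋂ q ∈ b', g q with hOdef
  have hOo : IsOpen O := Set.Finite.isOpen_biInter hb'fin (fun q hq => (hg q hq).1)
  have hS₀O : S₀ = O ∩ D := by
    ext z
    simp only [hS₀def, hOdef, Set.mem_inter_iff, Set.mem_iInter]
    constructor
    · rintro ⟨hzD, hz2⟩
      refine ⟨fun q hq => ?_, hzD⟩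
      have h2 := (hg q hq).2
      have : z ∈ g q ∩ D := h2 ▸ hz2 q hq
      exact this.1
    · rintro ⟨hz2, hzD⟩
      refine ⟨hzD, fun q hq => ?_⟩
      have h2 := (hg q hq).2
      rw [h2]
      exact ⟨hz2 q hq, hzD⟩
  set S : Set X := O ∩ interior D with hSdef
  have hSS₀ : S = S₀ := by
    apply subset_antisymm
    · rintro z ⟨hzO, hzint⟩
      rw [hS₀O]
      exact ⟨hzO, interior_subset hzint⟩
    · intro z hz
      exact ⟨(hS₀O ▸ hz : z ∈ O ∩ D).1, hS₀int hz⟩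
  have hSopen : IsOpen S := hOo.inter isOpen_interior
  refine ⟨S, ⟨hSopen, ?_⟩, ?_, ?_⟩
  · intro x y z hx hy hxz hzy
    rw [hSS₀] at *
    exact hS₀conv x y z hx hy hxz hzy
  · rw [hSS₀]; exact hpS₀
  · rw [hSS₀]; exact hS₀D.trans hDu
end

section
/- Let (X, ≤) be a lattice equipped with a locally compact, connected Hausdorff topology such that the meet and join operations are continuous from X × X to X. Let U be an open ≤-convex subset of X, let x ∈ U, and let ⟨x_λ⟩ be a net in X that order-converges to x: there exist nets ⟨y_λ⟩ and ⟨z_λ⟩ over the same directed set such that ⟨y_λ⟩ is ≤-increasing, ⟨z_λ⟩ is ≤-decreasing, y_λ ≤ x_λ ≤ z_λ for every λ, and the supremum of {y_λ} and the infimum of {z_λ} both exist and equal x. Then ⟨x_λ⟩ is eventually in U. (Consequently the topology of X is coarser than the convex-order topology.) -/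
open Set Filter

private lemma icc_closed {X : Type*} [Lattice X] [TopologicalSpace X] [T2Space X]
    (hmeet : Continuous fun p : X × X => p.1 ⊓ p.2)
    (hjoin : Continuous fun p : X × X => p.1 ⊔ p.2) (a b : X) : IsClosed (Set.Icc a b) := by
  have h1 : IsClosed {c : X | a ⊔ c = c} :=
    isClosed_eq (hjoin.comp (continuous_const.prodMk continuous_id)) continuous_id
  have h2 : IsClosed {c : X | b ⊓ c = c} :=
    isClosed_eq (hmeet.comp (continuous_const.prodMk continuous_id)) continuous_id
  have : Set.Icc a b = {c : X | a ⊔ c = c} ∩ {c : X | b ⊓ c = c} := by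
    ext c; simp [Set.mem_Icc, sup_eq_right, inf_eq_right]
  rw [this]; exact h1.inter h2

private lemma icc_preconn {X : Type*} [Lattice X] [TopologicalSpace X] [PreconnectedSpace X]
    (hmeet : Continuous fun p : X × X => p.1 ⊓ p.2)
    (hjoin : Continuous fun p : X × X => p.1 ⊔ p.2) (a b : X) (hab : a ≤ b) :
    IsPreconnected (Set.Icc a b) := by
  have hf : Continuous fun c : X => (c ⊔ a) ⊓ b :=
    hmeet.comp ((hjoin.comp (continuous_id.prodMk continuous_const)).prodMk continuous_const)
  have : Set.Icc a b = (fun c : X => (c ⊔ a) ⊓ b) '' Set.univ := by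
    ext c
    constructor
    · rintro ⟨h1, h2⟩
      exact ⟨c, trivial, by simp [sup_eq_left.mpr h1, inf_eq_left.mpr h2]⟩
    · rintro ⟨d, -, rfl⟩
      exact ⟨le_inf le_sup_right hab, inf_le_right⟩
  rw [this]
  exact isPreconnected_univ.image _ hf.continuousOn

/-- Auxiliary: a cluster point of a net eventually in every `Icc (y l) x` equals `x`. -/
private lemma cluster_eq {X : Type*} [Lattice X] [TopologicalSpace X] [T2Space X]
    (hmeet : Continuous fun p : X × X => p.1 ⊓ p.2)
    (hjoin : Continuous fun p : X × X => p.1 ⊔ p.2)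
    {Λ : Type*} [Preorder Λ] [IsDirected Λ (· ≤ ·)] [Nonempty Λ]
    (y : Λ → X) (x : X) (hsup : IsLUB (Set.range y) x)
    (q : Λ → X) (hq : ∀ l m : Λ, l ≤ m → q m ∈ Set.Icc (y l) x)
    (a : X) (ha : ClusterPt a (Filter.map q Filter.atTop)) : a = x := by
  have hmem : ∀ l : Λ, a ∈ Set.Icc (y l) x := by
    intro l
    have hev : Set.Icc (y l) x ∈ Filter.map q Filter.atTop :=
      Filter.eventually_atTop.mpr ⟨l, fun m hm => hq l m hm⟩
    have hc : ClusterPt a (Filter.principal (Set.Icc (y l) x)) :=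
      ha.mono (Filter.le_principal_iff.mpr hev)
    have := mem_closure_iff_clusterPt.mpr hc
    rwa [(icc_closed hmeet hjoin (y l) x).closure_eq] at this
  have hub : a ∈ upperBounds (Set.range y) := by
    rintro b ⟨l, rfl⟩; exact (hmem l).1
  exact le_antisymm (hmem (Classical.arbitrary Λ)).2 (hsup.2 hub)

/-- Auxiliary: an increasing net with supremum `x ∈ U` (open) eventually meets `U`. -/
private lemma exists_mem_of_isLUB {X : Type*} [Lattice X] [TopologicalSpace X] [T2Space X]
    [LocallyCompactSpace X] [ConnectedSpace X]
    (hmeet : Continuous fun p : X × X => p.1 ⊓ p.2)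
    (hjoin : Continuous fun p : X × X => p.1 ⊔ p.2)
    (U : Set X) (hU : IsOpen U) (x : X) (hx : x ∈ U)
    {Λ : Type*} [Preorder Λ] [IsDirected Λ (· ≤ ·)] [Nonempty Λ]
    (y : Λ → X) (hy : Monotone y) (hsup : IsLUB (Set.range y) x) : ∃ l, y l ∈ U := by
  obtain ⟨K, hKc, hKn⟩ := exists_compact_mem_nhds x
  have hxK : x ∈ interior K := mem_interior_iff_mem_nhds.mpr hKn
  have hylex : ∀ l, y l ≤ x := fun l => hsup.1 ⟨l, rfl⟩
  -- Step 1: some interval `Icc (y l0) x` is contained in `K`.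
  have hD : ∃ l0, Set.Icc (y l0) x ⊆ K := by
    by_contra hD
    push_neg at hD
    set B : Set X := K \ interior K with hB
    have hBc : IsCompact B := hKc.of_isClosed_subset (hKc.isClosed.sdiff isOpen_interior)
      Set.diff_subset
    -- for each l pick a point in `Icc (y l) x ∩ B`
    have hp : ∀ l, ∃ p, p ∈ Set.Icc (y l) x ∩ B := by
      intro l
      obtain ⟨w, hw1, hw2⟩ := Set.not_subset.mp (hD l)
      by_contra hpe
      push_neg at hpe
      have hconn := icc_preconn hmeet hjoin (y l) x (hylex l)
      have hsub : Set.Icc (y l) x ⊆ interior K ∪ Kᶜ := by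
        intro c hc
        by_cases hcK : c ∈ K
        · left
          by_contra hci
          exact hpe c ⟨hc, hcK, hci⟩
        · right; exact hcK
      obtain ⟨c, hc1, hc2⟩ := hconn (interior K) Kᶜ isOpen_interior hKc.isClosed.isOpen_compl
        hsub ⟨x, ⟨hylex l, le_refl x⟩, hxK⟩ ⟨w, hw1, hw2⟩
      exact hc2.2 (interior_subset hc2.1)
    choose p hp using hp
    have hle : Filter.map p Filter.atTop ≤ Filter.principal B :=
      Filter.le_principal_iff.mpr (Filter.mem_map.mpr (Filter.Eventually.of_forall fun l => (hp l).2))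
    obtain ⟨a, haB, hacl⟩ := hBc.exists_clusterPt hle
    have : a = x := cluster_eq hmeet hjoin y x hsup p
      (fun l m hlm => ⟨le_trans (hy hlm) (hp m).1.1, (hp m).1.2⟩) a hacl
    exact haB.2 (this ▸ hxK)
  obtain ⟨l0, hl0⟩ := hD
  -- Step 2: the (shifted) net is eventually in the compact set `Icc (y l0) x`,
  -- hence has a cluster point, which must be `x ∈ U`.
  by_contra h
  push_neg at h
  set y' : Λ → X := fun l => y l ⊔ y l0 with hy'
  have hy'mem : ∀ l, y' l ∈ Set.Icc (y l0) x := fun l =>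
    ⟨le_sup_right, sup_le (hylex l) (hylex l0)⟩
  have hle : Filter.map y' Filter.atTop ≤ Filter.principal (Set.Icc (y l0) x) :=
    Filter.le_principal_iff.mpr (Filter.mem_map.mpr (Filter.Eventually.of_forall fun l => hy'mem l))
  have hKc' : IsCompact (Set.Icc (y l0) x) :=
    hKc.of_isClosed_subset (icc_closed hmeet hjoin _ _) hl0
  obtain ⟨a, -, hacl⟩ := hKc'.exists_clusterPt hle
  have hax : a = x := by
    refine cluster_eq hmeet hjoin y x hsup y' (fun l m hlm => ⟨?_, (hy'mem m).2⟩) a hacl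
    exact le_trans (hy hlm) le_sup_left
  -- but `a` is a cluster point of a net avoiding the open `U`, while `a = x ∈ U`
  have hUc : Uᶜ ∈ Filter.map y' Filter.atTop := by
    refine Filter.eventually_atTop.mpr ⟨l0, fun m hm => ?_⟩
    have : y' m = y m := sup_eq_left.mpr (hy hm)
    rw [this]; exact h m
  have hc : ClusterPt a (Filter.principal Uᶜ) := hacl.mono (Filter.le_principal_iff.mpr hUc)
  have := mem_closure_iff_clusterPt.mpr hc
  rw [hU.isClosed_compl.closure_eq] at this
  exact this (hax ▸ hx)

/-- Let `(X, ≤)` be a locally compact, connected Hausdorff topological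
lattice, `U` an open order-convex subset of `X`, and `x ∈ U`.  If a net `⟨x_λ⟩`
order-converges to `x` — i.e. there are an increasing net `⟨y_λ⟩` and a decreasing net
`⟨z_λ⟩` over the same directed set with `y_λ ≤ x_λ ≤ z_λ`, `sup y_λ = x = inf z_λ` — then
`⟨x_λ⟩` is eventually in `U`.  (Hence the topology of `X` is coarser than the convex-order
topology.) -/
theorem eventually_mem_of_orderConverges
    {X : Type*} [Lattice X] [TopologicalSpace X] [T2Space X] [LocallyCompactSpace X]
    [ConnectedSpace X]
    (hmeet : Continuous fun p : X × X => p.1 ⊓ p.2)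
    (hjoin : Continuous fun p : X × X => p.1 ⊔ p.2)
    (U : Set X) (hU : IsOpen U)
    (hconv : ∀ a b z : X, a ∈ U → b ∈ U → a ≤ z → z ≤ b → z ∈ U)
    (x : X) (hx : x ∈ U)
    {Λ : Type*} [Preorder Λ] [IsDirected Λ (· ≤ ·)] [Nonempty Λ]
    (xl y z : Λ → X)
    (hy : Monotone y) (hz : Antitone z)
    (hyx : ∀ l : Λ, y l ≤ xl l) (hxz : ∀ l : Λ, xl l ≤ z l)
    (hsup : IsLUB (Set.range y) x) (hinf : IsGLB (Set.range z) x) :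
    ∀ᶠ l in Filter.atTop, xl l ∈ U := by
  obtain ⟨ly, hly⟩ := exists_mem_of_isLUB hmeet hjoin U hU x hx y hy hsup
  haveI : T2Space Xᵒᵈ := ‹T2Space X›
  haveI : LocallyCompactSpace Xᵒᵈ := ‹LocallyCompactSpace X›
  haveI : ConnectedSpace Xᵒᵈ := ‹ConnectedSpace X›
  have hzd : Monotone (fun l => OrderDual.toDual (z l)) := fun a b hab => hz hab
  have hinfd : IsLUB (Set.range fun l => OrderDual.toDual (z l)) (OrderDual.toDual x) := by
    convert hinf.dual using 1
    ext w
    constructor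
    · rintro ⟨l, rfl⟩; exact ⟨l, rfl⟩
    · rintro ⟨l, hl⟩; exact ⟨l, by show OrderDual.toDual (z l) = w; rw [hl]; rfl⟩
  obtain ⟨lz, hlz⟩ := exists_mem_of_isLUB (X := Xᵒᵈ)
    (by exact hjoin) (by exact hmeet) (OrderDual.ofDual ⁻¹' U) (by exact hU)
    (OrderDual.toDual x) (by exact hx) _ hzd hinfd
  obtain ⟨l1, hl1y, hl1z⟩ := exists_ge_ge ly lz
  refine Filter.eventually_atTop.mpr ⟨l1, fun m hm => ?_⟩
  refine hconv (y ly) (z lz) (xl m) hly hlz ?_ ?_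
  · exact le_trans (hy (le_trans hl1y hm)) (hyx m)
  · exact le_trans (hxz m) (hz (le_trans hl1z hm))
end

section
/- Let (X, ≤) be a lattice equipped with a locally compact, connected Hausdorff topology such that the meet and join operations are continuous from X × X to X. Then (X, ≤) is a completely regular ordered space: (1) whenever x, y ∈ X and x ≤ y fails, there is a continuous order-preserving function f : X → ℝ with f(x) > f(y); and (2) for every x ∈ X and every neighborhood V of x, there exist continuous functions f, g : X → [0, 1] with f order-preserving, g order-reversing, f(x) = 1 = g(x), and min{f(z), g(z)} = 0 for all z ∈ X \ V. -/
open Topology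

/-- Auxiliary: given a continuous binary operation `m` and a relation `r` with suitable
absorption properties, and a compactly supported `[0,1]`-valued continuous `h` with `h x = 1`,
the function `z ↦ sup_{k ∈ tsupport h} h (m z k)` is continuous, `r`-monotone, `[0,1]`-valued,
equals `1` at `x`, and is positive only at points `r`-above a point where `h` is positive. -/
theorem supAux_of_compact_support {X : Type*} [TopologicalSpace X]
    (m : X → X → X) (r : X → X → Prop)
    (hm : Continuous fun p : X × X => m p.1 p.2)
    (hrefl : ∀ a, r a a)
    (htrans : ∀ {a b c}, r a b → r b c → r a c)
    (habs : ∀ z w, r w z → m z w = w)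
    (hlow : ∀ z k, r (m z k) z)
    {h : X → ℝ} (hc : Continuous h) (hcs : IsCompact (tsupport h))
    (hrange : ∀ z, h z ∈ Set.Icc (0 : ℝ) 1) {x : X} (hx : h x = 1) :
    ∃ f : X → ℝ, Continuous f ∧ (∀ z₁ z₂, r z₁ z₂ → f z₁ ≤ f z₂) ∧
      (∀ z, f z ∈ Set.Icc (0 : ℝ) 1) ∧ f x = 1 ∧
      ∀ z, f z ≠ 0 → ∃ w, r w z ∧ 0 < h w := by
  set K : Set X := tsupport h with hK
  have hxK : x ∈ K := subset_tsupport h (by simp [hx])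
  set f : X → ℝ := fun z => sSup ((fun k => h (m z k)) '' K) with hf
  have hub : ∀ z, ∀ c ∈ (fun k => h (m z k)) '' K, c ≤ 1 := by
    rintro z c ⟨k, -, rfl⟩; exact (hrange _).2
  have hbdd : ∀ z, BddAbove ((fun k => h (m z k)) '' K) := fun z => ⟨1, hub z⟩
  have hle1 : ∀ z, f z ≤ 1 := fun z => Real.sSup_le (hub z) zero_le_one
  have hge0 : ∀ z, 0 ≤ f z := fun z =>
    le_trans (hrange (m z x)).1 (le_csSup (hbdd z) ⟨x, hxK, rfl⟩)
  have hmono : ∀ z₁ z₂, r z₁ z₂ → f z₁ ≤ f z₂ := by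
    intro z₁ z₂ hr
    refine Real.sSup_le ?_ (hge0 z₂)
    rintro c ⟨k, -, rfl⟩
    show h (m z₁ k) ≤ f z₂
    by_cases hc0 : h (m z₁ k) = 0
    · rw [hc0]; exact hge0 z₂
    · have hwK : m z₁ k ∈ K := subset_tsupport h hc0
      have : m z₂ (m z₁ k) = m z₁ k := habs _ _ (htrans (hlow z₁ k) hr)
      calc h (m z₁ k) = h (m z₂ (m z₁ k)) := by rw [this]
        _ ≤ f z₂ := le_csSup (hbdd z₂) ⟨m z₁ k, hwK, rfl⟩
  refine ⟨f, ?_, hmono, fun z => ⟨hge0 z, hle1 z⟩, ?_, ?_⟩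
  · exact IsCompact.continuous_sSup hcs (hc.comp hm)
  · refine le_antisymm (hle1 x) ?_
    have : h (m x x) = 1 := by rw [habs x x (hrefl x), hx]
    calc (1 : ℝ) = h (m x x) := this.symm
      _ ≤ f x := le_csSup (hbdd x) ⟨x, hxK, rfl⟩
  · intro z hz
    by_contra hcon
    push_neg at hcon
    refine hz (le_antisymm (Real.sSup_le ?_ le_rfl) (hge0 z))
    rintro c ⟨k, -, rfl⟩
    show h (m z k) ≤ 0
    exact hcon (m z k) (hlow z k)

/-- Every locally compact, connected Hausdorff topological lattice is a
completely regular ordered space: (1) whenever `x ≤ y` fails there is a continuous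
order-preserving real function with `f y < f x`; and (2) for every `x` and every neighborhood
`V` of `x` there are continuous functions `f, g : X → [0,1]`, `f` order-preserving and `g`
order-reversing, with `f x = 1 = g x` and `min (f z) (g z) = 0` off `V`. -/
theorem completely_regular_ordered_of_connected_topological_lattice
    {X : Type*} [Lattice X] [TopologicalSpace X] [T2Space X] [LocallyCompactSpace X]
    [ConnectedSpace X]
    (hmeet : Continuous fun p : X × X => p.1 ⊓ p.2)
    (hjoin : Continuous fun p : X × X => p.1 ⊔ p.2) :
    (∀ x y : X, ¬x ≤ y → ∃ f : X → ℝ, Continuous f ∧ Monotone f ∧ f y < f x) ∧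
    (∀ x : X, ∀ V ∈ 𝓝 x, ∃ f g : X → ℝ,
      Continuous f ∧ Continuous g ∧ Monotone f ∧ Antitone g ∧
      (∀ z : X, f z ∈ Set.Icc (0 : ℝ) 1) ∧ (∀ z : X, g z ∈ Set.Icc (0 : ℝ) 1) ∧
      f x = 1 ∧ g x = 1 ∧ ∀ z : X, z ∉ V → min (f z) (g z) = 0) := by
  -- the order relation is closed
  have hle_closed : IsClosed {p : X × X | p.1 ≤ p.2} := by
    have : {p : X × X | p.1 ≤ p.2}
        = (fun p : X × X => (p.1 ⊓ p.2, p.1)) ⁻¹' Set.diagonal X := by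
      ext p; simp [Set.diagonal, inf_eq_left, eq_comm]
    rw [this]
    exact isClosed_diagonal.preimage (hmeet.prodMk continuous_fst)
  -- Part (2) first.
  have part2 : ∀ x : X, ∀ V ∈ 𝓝 x, ∃ f g : X → ℝ,
      Continuous f ∧ Continuous g ∧ Monotone f ∧ Antitone g ∧
      (∀ z : X, f z ∈ Set.Icc (0 : ℝ) 1) ∧ (∀ z : X, g z ∈ Set.Icc (0 : ℝ) 1) ∧
      f x = 1 ∧ g x = 1 ∧ ∀ z : X, z ∉ V → min (f z) (g z) = 0 := by
    intro x V hV
    obtain ⟨K, hKc, hxK, hKV⟩ :=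
      exists_compact_subset isOpen_interior (mem_interior_iff_mem_nhds.2 hV)
    have hKclosed : IsClosed K := hKc.isClosed
    set F : Set X := K \ interior K with hFdef
    have hFc : IsCompact F := hKc.diff isOpen_interior
    -- the "bad" set of pairs whose interval meets the boundary F
    set C : Set (X × X) := {p | ∃ z ∈ F, p.1 ≤ z ∧ z ≤ p.2} with hCdef
    have hCclosed : IsClosed C := by
      haveI : CompactSpace ↥F := isCompact_iff_compactSpace.mp hFc
      have hset : IsClosed {q : (X × X) × ↥F | q.1.1 ≤ (q.2 : X) ∧ (q.2 : X) ≤ q.1.2} := by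
        refine IsClosed.inter ?_ ?_
        · exact hle_closed.preimage ((continuous_fst.fst).prodMk
            (continuous_subtype_val.comp continuous_snd))
        · exact hle_closed.preimage ((continuous_subtype_val.comp continuous_snd).prodMk
            (continuous_fst.snd))
      have himg : C = Prod.fst '' {q : (X × X) × ↥F |
          q.1.1 ≤ (q.2 : X) ∧ (q.2 : X) ≤ q.1.2} := by
        ext p
        constructor
        · rintro ⟨z, hzF, h1, h2⟩; exact ⟨(p, ⟨z, hzF⟩), ⟨h1, h2⟩, rfl⟩
        · rintro ⟨⟨q, z⟩, ⟨h1, h2⟩, rfl⟩; exact ⟨z, z.2, h1, h2⟩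
      rw [himg]
      exact isClosedMap_fst_of_compactSpace _ hset
    have hxxC : (x, x) ∉ C := by
      rintro ⟨z, hzF, h1, h2⟩
      exact hzF.2 (le_antisymm h2 h1 ▸ hxK)
    obtain ⟨u, v, hu, hv, hxu, hxv, huv⟩ :=
      isOpen_prod_iff.mp hCclosed.isOpen_compl x x hxxC
    set U : Set X := u ∩ v ∩ interior K with hUdef
    have hUopen : IsOpen U := ((hu.inter hv).inter isOpen_interior)
    have hxU : x ∈ U := ⟨⟨hxu, hxv⟩, hxK⟩
    -- intervals with endpoints in U stay inside V
    have hIcc : ∀ a b : X, a ∈ U → b ∈ U → a ≤ b → Set.Icc a b ⊆ V := by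
      intro a b ha hb hab
      have hC : (a, b) ∉ C := huv (Set.mk_mem_prod ha.1.1 hb.1.2)
      have hconn : IsPreconnected (Set.Icc a b) := by
        have hrange : Set.Icc a b = Set.range (fun z : X => (z ⊔ a) ⊓ b) := by
          ext w
          constructor
          · intro hw
            exact ⟨w, by show (w ⊔ a) ⊓ b = w; rw [sup_eq_left.mpr hw.1, inf_eq_left.mpr hw.2]⟩
          · rintro ⟨z, rfl⟩
            exact ⟨le_inf le_sup_right hab, inf_le_right⟩
        have c1 : Continuous fun z : X => z ⊔ a :=
          hjoin.comp (continuous_id.prodMk continuous_const)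
        have c2 : Continuous fun z : X => (z ⊔ a) ⊓ b :=
          hmeet.comp (c1.prodMk continuous_const)
        rw [hrange]
        exact isPreconnected_range c2
      have hsub : Set.Icc a b ⊆ interior K ∪ Kᶜ := by
        intro z hz
        by_cases hzK : z ∈ K
        · left
          by_contra hint
          exact hC ⟨z, ⟨hzK, hint⟩, hz.1, hz.2⟩
        · right; exact hzK
      have hdisj : Disjoint (interior K) Kᶜ :=
        disjoint_compl_right.mono_left interior_subset
      have hIK : Set.Icc a b ⊆ interior K :=
        hconn.subset_left_of_subset_union isOpen_interior hKclosed.isOpen_compl hdisj hsub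
          ⟨a, Set.left_mem_Icc.mpr hab, ha.2⟩
      exact hIK.trans (interior_subset.trans (hKV.trans interior_subset))
    -- Urysohn function supported in U
    obtain ⟨h, h1, h0, hcs, hrange⟩ :=
      exists_continuous_one_zero_of_isCompact (isCompact_singleton (x := x))
        hUopen.isClosed_compl
        (Set.disjoint_singleton_left.mpr fun hc => hc hxU)
    have hx1 : h x = 1 := h1 rfl
    have hsupp : ∀ c : X, h c ≠ 0 → c ∈ U := fun c hc => by
      by_contra hcU
      exact hc (h0 hcU)
    have hcs' : IsCompact (tsupport ⇑h) := hcs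
    -- build f (monotone) and g (antitone)
    obtain ⟨f, hfc, hfm, hfr, hfx, hfpos⟩ :=
      supAux_of_compact_support (fun z k => z ⊓ k) (· ≤ ·) hmeet le_refl
        (fun hab hbc => le_trans hab hbc) (fun z w hw => inf_eq_right.mpr hw)
        (fun z k => inf_le_left) h.continuous hcs' hrange hx1
    obtain ⟨g, hgc, hgm, hgr, hgx, hgpos⟩ :=
      supAux_of_compact_support (fun z k => z ⊔ k) (fun a b => b ≤ a) hjoin le_refl
        (fun hab hbc => le_trans hbc hab) (fun z w hw => sup_eq_right.mpr hw)
        (fun z k => le_sup_left) h.continuous hcs' hrange hx1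
    refine ⟨f, g, hfc, hgc, fun a b hab => hfm a b hab, fun a b hab => hgm b a hab,
      hfr, hgr, hfx, hgx, ?_⟩
    intro z hzV
    by_contra hmin
    have hf0 : f z ≠ 0 := by
      intro h'
      rw [h'] at hmin
      exact hmin (min_eq_left (hgr z).1)
    have hg0 : g z ≠ 0 := by
      intro h'
      rw [h'] at hmin
      exact hmin (min_eq_right (hfr z).1)
    obtain ⟨a, haz, hha⟩ := hfpos z hf0
    obtain ⟨b, hzb, hhb⟩ := hgpos z hg0
    have haU : a ∈ U := hsupp a (ne_of_gt hha)
    have hbU : b ∈ U := hsupp b (ne_of_gt hhb)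
    exact hzV (hIcc a b haU hbU (le_trans haz hzb) ⟨haz, hzb⟩)
  -- Part (1) from Part (2).
  refine ⟨?_, part2⟩
  intro x y hxy
  have hne : x ⊔ y ≠ y := fun hc => hxy (sup_eq_right.mp hc)
  have hV : ({y}ᶜ : Set X) ∈ 𝓝 (x ⊔ y) :=
    isOpen_compl_singleton.mem_nhds (by simpa using hne)
  obtain ⟨f, g, hfc, hgc, hfm, hgm, hfr, hgr, hfx, hgx, hmin⟩ := part2 (x ⊔ y) _ hV
  have hmy : min (f y) (g y) = 0 := hmin y (by simp)
  have hgy : (1 : ℝ) ≤ g y := hgx ▸ hgm le_sup_right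
  have hfy : f y = 0 := by
    rcases min_eq_iff.mp hmy with h | h
    · exact h.1
    · exfalso
      rw [h.1] at hgy
      norm_num at hgy
  refine ⟨fun z => f (z ⊔ y), hfc.comp (hjoin.comp (continuous_id.prodMk continuous_const)),
    fun a b hab => hfm (sup_le_sup_right hab y), ?_⟩
  have h1 : f (y ⊔ y) = 0 := by rwa [sup_idem]
  have h2 : f (x ⊔ y) = 1 := hfx
  simp only [h1, h2]
  norm_num
end
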